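/- arXiv:1610.08774 — 2 statements merged into one kernel-verified Lean document; each statement's English description precedes it below -/
import Mathlib

section
/- In a tangent category with negatives, let K be a vertical connection on a differential bundle 𝗊, and suppose 𝗊 has some horizontal connection J. Then J(1_{T(E)} − ⟨K, p⟩μ) is a horizontal connection on 𝗊, and the pair (K, J(1_{T(E)} − ⟨K, p⟩μ)) is a connection on 𝗊. -/
/-!
Put `V = ⟨K, p⟩μ` and `S = 1 − V`, computed in the abelian group of tangent vectors over a
fixed point. Since `μT(q)` factors through `0` and `μK = π₀`, `V` is vertical with `VK = K`;
hence `S` preserves `T(q)` and `p`, and `SK = K − VK = 0` because `K` is additive on the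
fibres of `p`. Both `ℓ` and `T(λ)c` are additive from `p_E` to `T(p_E)` and commute with `V`
(by the linearity of `K` and of `λ`), so cancelling `V` in `T(p_E)` shows that they commute
with `S`. These four properties make `JS` a horizontal connection, and `JSK = 0`.

For the decomposition, a tangent vector is determined by its images under `T(q)`, `K` and
`p`: the difference of two such vectors is vertical with zero `K`-part, hence zero by the
universality of the lift. Comparing `V + U(JS)` with `1` under these three maps gives
`⟨K, p⟩μ + U(JS) = 1`.
-/

open CategoryTheory CategoryTheory.Limits

open scoped Classical

universe v u

variable {C : Type u} [Category.{v} C]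

/-- Chosen pullback: explicit pullback data for a cospan `f : A ⟶ Z ⟵ B : g`. -/
structure ChosenPB {A B Z : C} (f : A ⟶ Z) (g : B ⟶ Z) where
  P : C
  pr0 : P ⟶ A
  pr1 : P ⟶ B
  comm : pr0 ≫ f = pr1 ≫ g
  pair : ∀ {X : C} (u : X ⟶ A) (v : X ⟶ B), u ≫ f = v ≫ g → (X ⟶ P)
  pair_pr0 : ∀ {X : C} (u : X ⟶ A) (v : X ⟶ B) (h : u ≫ f = v ≫ g),
    pair u v h ≫ pr0 = u
  pair_pr1 : ∀ {X : C} (u : X ⟶ A) (v : X ⟶ B) (h : u ≫ f = v ≫ g),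
    pair u v h ≫ pr1 = v
  hom_ext : ∀ {X : C} (w w' : X ⟶ P),
    w ≫ pr0 = w' ≫ pr0 → w ≫ pr1 = w' ≫ pr1 → w = w'

/-- Witness that the endofunctor `T` preserves the chosen pullback `PB`. -/
structure PBLift (T : C ⥤ C) {A B Z : C} {f : A ⟶ Z} {g : B ⟶ Z} (PB : ChosenPB f g) where
  pair : ∀ {X : C} (u : X ⟶ T.obj A) (v : X ⟶ T.obj B),
    u ≫ T.map f = v ≫ T.map g → (X ⟶ T.obj PB.P)
  pair_pr0 : ∀ {X : C} (u : X ⟶ T.obj A) (v : X ⟶ T.obj B)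
    (h : u ≫ T.map f = v ≫ T.map g), pair u v h ≫ T.map PB.pr0 = u
  pair_pr1 : ∀ {X : C} (u : X ⟶ T.obj A) (v : X ⟶ T.obj B)
    (h : u ≫ T.map f = v ≫ T.map g), pair u v h ≫ T.map PB.pr1 = v
  hom_ext : ∀ {X : C} (w w' : X ⟶ T.obj PB.P),
    w ≫ T.map PB.pr0 = w' ≫ T.map PB.pr0 → w ≫ T.map PB.pr1 = w' ≫ T.map PB.pr1 → w = w'

/-- The image of a preserved chosen pullback is again a chosen pullback. -/
def PBLift.toChosenPB {T : C ⥤ C} {A B Z : C} {f : A ⟶ Z} {g : B ⟶ Z} {PB : ChosenPB f g}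
    (L : PBLift T PB) : ChosenPB (T.map f) (T.map g) where
  P := T.obj PB.P
  pr0 := T.map PB.pr0
  pr1 := T.map PB.pr1
  comm := by rw [← T.map_comp, ← T.map_comp, PB.comm]
  pair := L.pair
  pair_pr0 := L.pair_pr0
  pair_pr1 := L.pair_pr1
  hom_ext := L.hom_ext

/-- Iterated endofunctor `Tⁿ`. -/
def fpow (T : C ⥤ C) : ℕ → C ⥤ C
  | 0 => 𝟭 C
  | n + 1 => fpow T n ⋙ T

/-- A tangent category in the sense of Cockett–Cruttwell, presented with chosen
pullbacks `T₂M` of `p_M` along itself (preserved by each `Tⁿ`), addition `+`,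
projection `p`, zero `0`, vertical lift `ℓ` and canonical flip `c`, together
with the universality of the vertical lift. Sums, associativity etc. are
expressed in generalized-element form via the chosen pullback pairings. -/
structure TangentCat (C : Type u) [Category.{v} C] where
  T : C ⥤ C
  p : T ⟶ 𝟭 C
  zero : 𝟭 C ⟶ T
  l : T ⟶ T ⋙ T
  c : T ⋙ T ⟶ T ⋙ T
  T2 : ∀ M : C, ChosenPB (p.app M) (p.app M)
  T2T : ∀ M : C, PBLift T (T2 M)
  T2Tn : ∀ (M : C) (n : ℕ), PBLift (fpow T n) (T2 M)
  add : ∀ M : C, (T2 M).P ⟶ T.obj M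
  add_nat : ∀ {M N : C} (f : M ⟶ N) {X : C} (u v : X ⟶ T.obj M)
    (h : u ≫ p.app M = v ≫ p.app M)
    (h' : (u ≫ T.map f) ≫ p.app N = (v ≫ T.map f) ≫ p.app N),
    (T2 M).pair u v h ≫ add M ≫ T.map f
      = (T2 N).pair (u ≫ T.map f) (v ≫ T.map f) h' ≫ add N
  zero_p : ∀ M : C, zero.app M ≫ p.app M = 𝟙 M
  add_p : ∀ M : C, add M ≫ p.app M = (T2 M).pr0 ≫ p.app M
  add_comm' : ∀ (M : C) {X : C} (f g : X ⟶ T.obj M) (h : f ≫ p.app M = g ≫ p.app M),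
    (T2 M).pair f g h ≫ add M = (T2 M).pair g f h.symm ≫ add M
  add_assoc' : ∀ (M : C) {X : C} (f g k : X ⟶ T.obj M)
    (h1 : f ≫ p.app M = g ≫ p.app M) (h2 : g ≫ p.app M = k ≫ p.app M)
    (h3 : ((T2 M).pair f g h1 ≫ add M) ≫ p.app M = k ≫ p.app M)
    (h4 : f ≫ p.app M = ((T2 M).pair g k h2 ≫ add M) ≫ p.app M),
    (T2 M).pair ((T2 M).pair f g h1 ≫ add M) k h3 ≫ add M
      = (T2 M).pair f ((T2 M).pair g k h2 ≫ add M) h4 ≫ add M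
  add_zero' : ∀ (M : C) {X : C} (f : X ⟶ T.obj M)
    (h : f ≫ p.app M = (f ≫ p.app M ≫ zero.app M) ≫ p.app M),
    (T2 M).pair f (f ≫ p.app M ≫ zero.app M) h ≫ add M = f
  l_Tp : ∀ M : C, l.app M ≫ T.map (p.app M) = p.app M ≫ zero.app M
  l_zero : ∀ M : C, zero.app M ≫ l.app M = zero.app M ≫ T.map (zero.app M)
  l_add : ∀ (M : C) {X : C} (f g : X ⟶ T.obj M) (h : f ≫ p.app M = g ≫ p.app M),
    ∃ w : X ⟶ T.obj (T2 M).P,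
      w ≫ T.map (T2 M).pr0 = f ≫ l.app M ∧ w ≫ T.map (T2 M).pr1 = g ≫ l.app M ∧
      (T2 M).pair f g h ≫ add M ≫ l.app M = w ≫ T.map (add M)
  c_p : ∀ M : C, c.app M ≫ p.app (T.obj M) = T.map (p.app M)
  c_zero : ∀ M : C, T.map (zero.app M) ≫ c.app M = zero.app (T.obj M)
  c_add : ∀ (M : C) {X : C} (u v : X ⟶ T.obj (T.obj M))
    (h : u ≫ T.map (p.app M) = v ≫ T.map (p.app M))
    (h' : (u ≫ c.app M) ≫ p.app (T.obj M) = (v ≫ c.app M) ≫ p.app (T.obj M)),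
    ∃ w : X ⟶ T.obj (T2 M).P,
      w ≫ T.map (T2 M).pr0 = u ∧ w ≫ T.map (T2 M).pr1 = v ∧
      w ≫ T.map (add M) ≫ c.app M
        = (T2 (T.obj M)).pair (u ≫ c.app M) (v ≫ c.app M) h' ≫ add (T.obj M)
  l_c : ∀ M : C, l.app M ≫ c.app M = l.app M
  c_c : ∀ M : C, c.app M ≫ c.app M = 𝟙 (T.obj (T.obj M))
  l_l : ∀ M : C, l.app M ≫ T.map (l.app M) = l.app M ≫ l.app (T.obj M)
  c_T_c : ∀ M : C, c.app (T.obj M) ≫ T.map (c.app M) ≫ c.app (T.obj M)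
    = T.map (c.app M) ≫ c.app (T.obj M) ≫ T.map (c.app M)
  l_T_c : ∀ M : C, l.app (T.obj M) ≫ T.map (c.app M) ≫ c.app (T.obj M)
    = c.app M ≫ T.map (l.app M)
  vmu : ∀ M : C, (T2 M).P ⟶ T.obj (T.obj M)
  vmu_spec : ∀ M : C, ∃ w : (T2 M).P ⟶ T.obj (T2 M).P,
    w ≫ T.map (T2 M).pr0 = (T2 M).pr0 ≫ l.app M ∧
    w ≫ T.map (T2 M).pr1 = (T2 M).pr1 ≫ zero.app (T.obj M) ∧
    vmu M = w ≫ T.map (add M)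
  vlift : ∀ {X M : C} (f : X ⟶ T.obj (T.obj M)),
    f ≫ T.map (p.app M) = f ≫ T.map (p.app M) ≫ p.app M ≫ zero.app M → (X ⟶ (T2 M).P)
  vlift_vmu : ∀ {X M : C} (f : X ⟶ T.obj (T.obj M))
    (h : f ≫ T.map (p.app M) = f ≫ T.map (p.app M) ≫ p.app M ≫ zero.app M),
    vlift f h ≫ vmu M = f
  vmu_mono : ∀ {X M : C} (w w' : X ⟶ (T2 M).P), w ≫ vmu M = w' ≫ vmu M → w = w'

/-- Negatives: each tangent bundle is a commutative group bundle. -/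
structure HasNegatives {C : Type u} [Category.{v} C] (D : TangentCat C) where
  neg : ∀ M : C, D.T.obj M ⟶ D.T.obj M
  neg_p : ∀ M : C, neg M ≫ D.p.app M = D.p.app M
  neg_add : ∀ (M : C) {X : C} (f : X ⟶ D.T.obj M)
    (h : f ≫ D.p.app M = (f ≫ neg M) ≫ D.p.app M),
    (D.T2 M).pair f (f ≫ neg M) h ≫ D.add M = f ≫ D.p.app M ≫ D.zero.app M

/-- Fibrewise sum of two maps into a tangent bundle (defined when the maps
agree under `p`; otherwise a default value). -/
noncomputable def TangentCat.hadd (D : TangentCat C) {X M : C}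
    (f g : X ⟶ D.T.obj M) : X ⟶ D.T.obj M :=
  if h : f ≫ D.p.app M = g ≫ D.p.app M then (D.T2 M).pair f g h ≫ D.add M else f

/-- Fibrewise difference `f - g` of two maps into a tangent bundle. -/
noncomputable def TangentCat.sub (D : TangentCat C) (N : HasNegatives D) {X M : C}
    (f g : X ⟶ D.T.obj M) : X ⟶ D.T.obj M :=
  D.hadd f (g ≫ N.neg M)

/-- The bracketing operation `{f}` for the tangent bundle, obtained from the
universality (equalizer property) of the vertical lift. -/
noncomputable def TangentCat.brkT (D : TangentCat C) {X M : C}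
    (f : X ⟶ D.T.obj (D.T.obj M)) : X ⟶ D.T.obj M :=
  if h : f ≫ D.T.map (D.p.app M) = f ≫ D.T.map (D.p.app M) ≫ D.p.app M ≫ D.zero.app M
  then D.vlift f h ≫ (D.T2 M).pr0 else f ≫ D.p.app (D.T.obj M)

/-- The Lie bracket of vector fields: `[w₁,w₂] = {w₁T(w₂) − w₂T(w₁)c}`. -/
noncomputable def TangentCat.lie (D : TangentCat C) (N : HasNegatives D) {M : C}
    (w1 w2 : M ⟶ D.T.obj M) : M ⟶ D.T.obj M :=
  D.brkT (D.sub N (w1 ≫ D.T.map w2) (w2 ≫ D.T.map w1 ≫ D.c.app M))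

/-- A differential bundle `𝗊 = (q, +_q, 0_q, λ)` on `E` over `M` in the tangent
category `D`, with chosen pullbacks `E₂` (of `q` along itself) and
`T(M) ×_M E` (of `p_M` along `q`), both preserved by each `Tⁿ`, together with
the lift axioms and the universality of the lift (in equalizer form). -/
structure DiffBundle {C : Type u} [Category.{v} C] (D : TangentCat C) (E M : C) where
  q : E ⟶ M
  E2 : ChosenPB q q
  TE2 : PBLift D.T E2
  TE2n : ∀ n : ℕ, PBLift (fpow D.T n) E2
  P : ChosenPB (D.p.app M) q
  TP : PBLift D.T P
  TPn : ∀ n : ℕ, PBLift (fpow D.T n) P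
  addq : E2.P ⟶ E
  zeroq : M ⟶ E
  lam : E ⟶ D.T.obj E
  addq_q : addq ≫ q = E2.pr0 ≫ q
  zeroq_q : zeroq ≫ q = 𝟙 M
  addq_comm : ∀ {X : C} (f g : X ⟶ E) (h : f ≫ q = g ≫ q),
    E2.pair f g h ≫ addq = E2.pair g f h.symm ≫ addq
  addq_assoc : ∀ {X : C} (f g k : X ⟶ E)
    (h1 : f ≫ q = g ≫ q) (h2 : g ≫ q = k ≫ q)
    (h3 : (E2.pair f g h1 ≫ addq) ≫ q = k ≫ q)
    (h4 : f ≫ q = (E2.pair g k h2 ≫ addq) ≫ q),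
    E2.pair (E2.pair f g h1 ≫ addq) k h3 ≫ addq
      = E2.pair f (E2.pair g k h2 ≫ addq) h4 ≫ addq
  addq_zero : ∀ {X : C} (f : X ⟶ E) (h : f ≫ q = (f ≫ q ≫ zeroq) ≫ q),
    E2.pair f (f ≫ q ≫ zeroq) h ≫ addq = f
  lam_Tq : lam ≫ D.T.map q = q ≫ D.zero.app M
  lam_zero1 : zeroq ≫ lam = D.zero.app M ≫ D.T.map zeroq
  lam_add1 : ∀ {X : C} (f g : X ⟶ E) (h : f ≫ q = g ≫ q),
    ∃ w : X ⟶ D.T.obj E2.P,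
      w ≫ D.T.map E2.pr0 = f ≫ lam ∧ w ≫ D.T.map E2.pr1 = g ≫ lam ∧
      E2.pair f g h ≫ addq ≫ lam = w ≫ D.T.map addq
  lam_p : lam ≫ D.p.app E = q ≫ zeroq
  lam_zero2 : zeroq ≫ lam = zeroq ≫ D.zero.app E
  lam_add2 : ∀ {X : C} (f g : X ⟶ E) (h : f ≫ q = g ≫ q)
    (h' : (f ≫ lam) ≫ D.p.app E = (g ≫ lam) ≫ D.p.app E),
    E2.pair f g h ≫ addq ≫ lam = (D.T2 E).pair (f ≫ lam) (g ≫ lam) h' ≫ D.add E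
  lam_l : lam ≫ D.l.app E = lam ≫ D.T.map lam
  mu : E2.P ⟶ D.T.obj E
  mu_spec : ∃ w : E2.P ⟶ D.T.obj E2.P,
    w ≫ D.T.map E2.pr0 = E2.pr0 ≫ lam ∧
    w ≫ D.T.map E2.pr1 = E2.pr1 ≫ D.zero.app E ∧
    mu = w ≫ D.T.map addq
  muLift : ∀ {X : C} (f : X ⟶ D.T.obj E),
    f ≫ D.T.map q = f ≫ D.p.app E ≫ q ≫ D.zero.app M → (X ⟶ E2.P)
  muLift_mu : ∀ {X : C} (f : X ⟶ D.T.obj E)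
    (h : f ≫ D.T.map q = f ≫ D.p.app E ≫ q ≫ D.zero.app M),
    muLift f h ≫ mu = f
  muLift_q : ∀ {X : C} (f : X ⟶ D.T.obj E)
    (h : f ≫ D.T.map q = f ≫ D.p.app E ≫ q ≫ D.zero.app M),
    muLift f h ≫ E2.pr0 ≫ q = f ≫ D.p.app E ≫ q
  mu_mono : ∀ {X : C} (w w' : X ⟶ E2.P), w ≫ mu = w' ≫ mu → w = w'

/-- The bracketing operation `{f}` for a differential bundle. -/
noncomputable def DiffBundle.brk {D : TangentCat C} {E M : C} (B : DiffBundle D E M)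
    {X : C} (f : X ⟶ D.T.obj E) : X ⟶ E :=
  if h : f ≫ D.T.map B.q = f ≫ D.p.app E ≫ B.q ≫ D.zero.app M
  then B.muLift f h ≫ B.E2.pr0 else f ≫ D.p.app E

/-- Negatives for a differential bundle (the fibrewise group structure). -/
structure BundleNegatives {D : TangentCat C} {E M : C} (B : DiffBundle D E M) where
  neg : E ⟶ E
  neg_q : neg ≫ B.q = B.q
  neg_add : ∀ {X : C} (f : X ⟶ E) (h : f ≫ B.q = (f ≫ neg) ≫ B.q),
    B.E2.pair f (f ≫ neg) h ≫ B.addq = f ≫ B.q ≫ B.zeroq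

/-- Fibrewise sum of maps into `E` for the bundle addition `+_q`. -/
noncomputable def DiffBundle.qadd {D : TangentCat C} {E M : C} (B : DiffBundle D E M)
    {X : C} (f g : X ⟶ E) : X ⟶ E :=
  if h : f ≫ B.q = g ≫ B.q then B.E2.pair f g h ≫ B.addq else f

/-- Fibrewise difference of maps into `E` for the bundle addition `+_q`. -/
noncomputable def DiffBundle.qsub {D : TangentCat C} {E M : C} (B : DiffBundle D E M)
    (NB : BundleNegatives B) {X : C} (f g : X ⟶ E) : X ⟶ E :=
  B.qadd f (g ≫ NB.neg)

/-- The horizontal descent `U = ⟨T(q), p⟩ : T(E) ⟶ T(M) ×_M E`. -/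
def TangentCat.hdesc (D : TangentCat C) {E M : C} (q : E ⟶ M)
    (P : ChosenPB (D.p.app M) q) : D.T.obj E ⟶ P.P :=
  P.pair (D.T.map q) (D.p.app E) (by simpa using D.p.naturality q)

/-- A vertical connection on the differential bundle with projection `q` and
lift `lam`: a retraction `K` of `lam` with `Kq = pq`, `Kλ = ℓT(K)` and
`Kλ = T(λ)cT(K)` (equivalently, `(K,p)` and `(K,q)` are linear bundle
morphisms). -/
def IsVerticalConnection (D : TangentCat C) {E M : C} (q : E ⟶ M)
    (lam : E ⟶ D.T.obj E) (K : D.T.obj E ⟶ E) : Prop :=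
  lam ≫ K = 𝟙 E ∧
  K ≫ q = D.p.app E ≫ q ∧
  K ≫ lam = D.l.app E ≫ D.T.map K ∧
  K ≫ lam = D.T.map lam ≫ D.c.app E ≫ D.T.map K

/-- Flatness of a vertical connection: `cT(K)K = T(K)K`. -/
def IsFlat (D : TangentCat C) {E : C} (K : D.T.obj E ⟶ E) : Prop :=
  D.c.app E ≫ D.T.map K ≫ K = D.T.map K ≫ K

/-- A horizontal connection on the differential bundle with projection `q`,
lift `lam` and horizontal pullback `P = T(M) ×_M E`: a section `H` of the
horizontal descent `U = ⟨T(q),p⟩` with `Hℓ = (ℓ×0)T(H)` and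
`HT(λ)c = (0×λ)T(H)` (equivalently, `(H,1)` is linear into `p_E` and into
`T(𝗊)`). -/
def IsHorizontalConnection (D : TangentCat C) {E M : C} (q : E ⟶ M)
    (lam : E ⟶ D.T.obj E) (P : ChosenPB (D.p.app M) q)
    (H : P.P ⟶ D.T.obj E) : Prop :=
  H ≫ D.T.map q = P.pr0 ∧
  H ≫ D.p.app E = P.pr1 ∧
  (∃ w : P.P ⟶ D.T.obj P.P,
    w ≫ D.T.map P.pr0 = P.pr0 ≫ D.l.app M ∧
    w ≫ D.T.map P.pr1 = P.pr1 ≫ D.zero.app E ∧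
    H ≫ D.l.app E = w ≫ D.T.map H) ∧
  (∃ w : P.P ⟶ D.T.obj P.P,
    w ≫ D.T.map P.pr0 = P.pr0 ≫ D.zero.app (D.T.obj M) ∧
    w ≫ D.T.map P.pr1 = P.pr1 ≫ lam ∧
    H ≫ D.T.map lam ≫ D.c.app E = w ≫ D.T.map H)

/-- A (full) connection, in unbundled form: a vertical connection `K` and a
horizontal connection `H` with `HK = π₁q0_q` and `⟨K,p⟩μ + UH = 1`. -/
noncomputable def IsConnectionPair (D : TangentCat C) {E M : C} (q : E ⟶ M)
    (lam : E ⟶ D.T.obj E) (EP : ChosenPB q q) (zeroq : M ⟶ E)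
    (mu : EP.P ⟶ D.T.obj E) (P : ChosenPB (D.p.app M) q)
    (K : D.T.obj E ⟶ E) (H : P.P ⟶ D.T.obj E) : Prop :=
  IsVerticalConnection D q lam K ∧
  IsHorizontalConnection D q lam P H ∧
  H ≫ K = P.pr1 ≫ q ≫ zeroq ∧
  ∃ R : D.T.obj E ⟶ EP.P, R ≫ EP.pr0 = K ∧ R ≫ EP.pr1 = D.p.app E ∧
    D.hadd (R ≫ mu) (D.hdesc q P ≫ H) = 𝟙 (D.T.obj E)

/-- A connection on a differential bundle. -/
noncomputable def IsConnection {D : TangentCat C} {E M : C} (B : DiffBundle D E M)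
    (K : D.T.obj E ⟶ E) (H : B.P.P ⟶ D.T.obj E) : Prop :=
  IsConnectionPair D B.q B.lam B.E2 B.zeroq B.mu B.P K H

/-- A Finsler connection on a differential bundle. -/
def IsFinslerConnection {D : TangentCat C} {E M : C} (B : DiffBundle D E M)
    (R : D.T.obj E ⟶ B.E2.P) : Prop :=
  B.mu ≫ R = 𝟙 B.E2.P ∧
  R ≫ B.E2.pr1 = D.p.app E ∧
  R ≫ B.E2.pr0 ≫ B.lam = D.T.map B.lam ≫ D.c.app E ≫ D.T.map (R ≫ B.E2.pr0) ∧
  D.l.app E ≫ D.T.map (R ≫ B.E2.pr0) = R ≫ B.E2.pr0 ≫ B.lam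

/-- The covariant derivative `∇_K(w,s) = wT(s)K`. -/
def nabla (D : TangentCat C) {E M : C} (K : D.T.obj E ⟶ E)
    (w : M ⟶ D.T.obj M) (s : M ⟶ E) : M ⟶ E :=
  w ≫ D.T.map s ≫ K

namespace ChosenPB

variable {A B Z : C} {f : A ⟶ Z} {g : B ⟶ Z} (PB : ChosenPB f g)

theorem pair_congr {X : C} {u u' : X ⟶ A} {v v' : X ⟶ B} {h : u ≫ f = v ≫ g}
    {h' : u' ≫ f = v' ≫ g} (hu : u = u') (hv : v = v') : PB.pair u v h = PB.pair u' v' h' := by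
  subst hu hv
  rfl

theorem eq_pair {X : C} {w : X ⟶ PB.P} {u : X ⟶ A} {v : X ⟶ B} (h : u ≫ f = v ≫ g)
    (h0 : w ≫ PB.pr0 = u) (h1 : w ≫ PB.pr1 = v) : w = PB.pair u v h :=
  PB.hom_ext _ _ (by rw [h0, PB.pair_pr0]) (by rw [h1, PB.pair_pr1])

theorem pair_id : PB.pair PB.pr0 PB.pr1 PB.comm = 𝟙 PB.P :=
  (PB.eq_pair _ (Category.id_comp _) (Category.id_comp _)).symm

theorem comp_pair {X Y : C} (x : Y ⟶ X) {u : X ⟶ A} {v : X ⟶ B} (h : u ≫ f = v ≫ g) :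
    x ≫ PB.pair u v h = PB.pair (x ≫ u) (x ≫ v) (by simp [h]) :=
  PB.hom_ext _ _ (by simp [PB.pair_pr0]) (by simp [PB.pair_pr1])

end ChosenPB

namespace PBLift

variable {T : C ⥤ C} {A B Z : C} {f : A ⟶ Z} {g : B ⟶ Z} {PB : ChosenPB f g} (L : PBLift T PB)

theorem pair_congr {X : C} {u u' : X ⟶ T.obj A} {v v' : X ⟶ T.obj B}
    {h : u ≫ T.map f = v ≫ T.map g} {h' : u' ≫ T.map f = v' ≫ T.map g}
    (hu : u = u') (hv : v = v') : L.pair u v h = L.pair u' v' h' := by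
  subst hu hv
  rfl

theorem eq_pair {X : C} {w : X ⟶ T.obj PB.P} {u : X ⟶ T.obj A} {v : X ⟶ T.obj B}
    (h : u ≫ T.map f = v ≫ T.map g) (h0 : w ≫ T.map PB.pr0 = u)
    (h1 : w ≫ T.map PB.pr1 = v) :
    w = L.pair u v h :=
  L.hom_ext _ _ (by rw [h0, L.pair_pr0]) (by rw [h1, L.pair_pr1])

theorem comp_pair {X Y : C} (x : Y ⟶ X) {u : X ⟶ T.obj A} {v : X ⟶ T.obj B}
    (h : u ≫ T.map f = v ≫ T.map g) :
    x ≫ L.pair u v h = L.pair (x ≫ u) (x ≫ v) (by simp [h]) :=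
  L.hom_ext _ _ (by simp [L.pair_pr0]) (by simp [L.pair_pr1])

theorem map_pair {W X : C} (x : X ⟶ T.obj W) {u : W ⟶ A} {v : W ⟶ B} (h : u ≫ f = v ≫ g) :
    x ≫ T.map (PB.pair u v h) = L.pair (x ≫ T.map u) (x ≫ T.map v)
      (by simp only [Category.assoc, ← T.map_comp, h]) :=
  L.hom_ext _ _ (by simp [← T.map_comp, PB.pair_pr0, L.pair_pr0])
    (by simp [← T.map_comp, PB.pair_pr1, L.pair_pr1])

end PBLift

namespace TangentCat

variable (D : TangentCat C)

theorem p_nat {A B : C} (g : A ⟶ B) : D.T.map g ≫ D.p.app B = D.p.app A ≫ g :=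
  D.p.naturality g

theorem zero_nat {A B : C} (g : A ⟶ B) : g ≫ D.zero.app B = D.zero.app A ≫ D.T.map g :=
  D.zero.naturality g

theorem l_nat {A B : C} (g : A ⟶ B) :
    D.T.map g ≫ D.l.app B = D.l.app A ≫ D.T.map (D.T.map g) :=
  D.l.naturality g

theorem c_nat {A B : C} (g : A ⟶ B) :
    D.T.map (D.T.map g) ≫ D.c.app B = D.c.app A ≫ D.T.map (D.T.map g) :=
  D.c.naturality g

theorem c_Tp (A : C) : D.c.app A ≫ D.T.map (D.p.app A) = D.p.app (D.T.obj A) := by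
  rw [← D.c_p, ← Category.assoc, D.c_c]
  exact Category.id_comp _

theorem zero_c (A : C) : D.zero.app (D.T.obj A) ≫ D.c.app A = D.T.map (D.zero.app A) := by
  rw [← D.c_zero, Category.assoc, D.c_c, Category.comp_id]

theorem l_p (A : C) : D.l.app A ≫ D.p.app (D.T.obj A) = D.p.app A ≫ D.zero.app A := by
  rw [← D.l_c A, Category.assoc, D.c_p, D.l_Tp]

theorem l_add_eq {A X : C} (x y : X ⟶ D.T.obj A) (h : x ≫ D.p.app A = y ≫ D.p.app A) :
    (D.T2 A).pair x y h ≫ D.add A ≫ D.l.app A =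
      (D.T2T A).pair (x ≫ D.l.app A) (y ≫ D.l.app A) (by simp [D.l_Tp, reassoc_of% h])
        ≫ D.T.map (D.add A) := by
  obtain ⟨w, hw0, hw1, hw⟩ := D.l_add A x y h
  rw [hw, (D.T2T A).eq_pair _ hw0 hw1]

theorem c_add_eq {A X : C} (u v : X ⟶ D.T.obj (D.T.obj A))
    (h : u ≫ D.T.map (D.p.app A) = v ≫ D.T.map (D.p.app A)) :
    (D.T2T A).pair u v h ≫ D.T.map (D.add A) ≫ D.c.app A =
      (D.T2 (D.T.obj A)).pair (u ≫ D.c.app A) (v ≫ D.c.app A) (by simp [D.c_p, h])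
        ≫ D.add (D.T.obj A) := by
  obtain ⟨w, hw0, hw1, hw⟩ := D.c_add A u v h (by simp [D.c_p, h])
  rw [← hw, (D.T2T A).eq_pair h hw0 hw1]

theorem add_c_eq {A X : C} (a b : X ⟶ D.T.obj (D.T.obj A))
    (h : a ≫ D.p.app (D.T.obj A) = b ≫ D.p.app (D.T.obj A)) :
    (D.T2 (D.T.obj A)).pair a b h ≫ D.add (D.T.obj A) ≫ D.c.app A =
      (D.T2T A).pair (a ≫ D.c.app A) (b ≫ D.c.app A) (by simp [D.c_Tp, h])
        ≫ D.T.map (D.add A) := by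
  have h' : (a ≫ D.c.app A) ≫ D.T.map (D.p.app A)
      = (b ≫ D.c.app A) ≫ D.T.map (D.p.app A) := by
    simp [D.c_Tp, h]
  calc (D.T2 (D.T.obj A)).pair a b h ≫ D.add (D.T.obj A) ≫ D.c.app A
      = ((D.T2T A).pair (a ≫ D.c.app A) (b ≫ D.c.app A) h' ≫ D.T.map (D.add A) ≫ D.c.app A)
          ≫ D.c.app A := by
        rw [c_add_eq, ← Category.assoc]
        congr 2
        exact (D.T2 (D.T.obj A)).pair_congr (by simp [D.c_c]) (by simp [D.c_c])
    _ = _ := by simp [D.c_c]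

theorem add_l_eq_add {A X : C} (x y : X ⟶ D.T.obj A) (h : x ≫ D.p.app A = y ≫ D.p.app A) :
    (D.T2 A).pair x y h ≫ D.add A ≫ D.l.app A =
      (D.T2 (D.T.obj A)).pair (x ≫ D.l.app A) (y ≫ D.l.app A)
        (by simp only [Category.assoc, D.l_p, reassoc_of% h]) ≫ D.add (D.T.obj A) := by
  conv_lhs => rw [← D.l_c, ← Category.assoc (D.add A), ← Category.assoc, l_add_eq,
    Category.assoc, c_add_eq]
  exact congrArg (· ≫ D.add (D.T.obj A)) ((D.T2 (D.T.obj A)).pair_congr (by simp [D.l_c])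
    (by simp [D.l_c]))

theorem pair_p {A B Z : C} {f : A ⟶ Z} {g : B ⟶ Z} {PB : ChosenPB f g} (L : PBLift D.T PB)
    {X : C} (u : X ⟶ D.T.obj A) (v : X ⟶ D.T.obj B) (h : u ≫ D.T.map f = v ≫ D.T.map g) :
    L.pair u v h ≫ D.p.app PB.P =
      PB.pair (u ≫ D.p.app A) (v ≫ D.p.app B) (by
        rw [Category.assoc, ← D.p_nat, ← Category.assoc, h, Category.assoc, D.p_nat,
          Category.assoc]) :=
  PB.eq_pair _ (by rw [Category.assoc, ← D.p_nat, ← Category.assoc, L.pair_pr0])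
    (by rw [Category.assoc, ← D.p_nat, ← Category.assoc, L.pair_pr1])

theorem hdesc_pr0 {E M : C} (q : E ⟶ M)
    (P : ChosenPB (D.p.app M) q) : D.hdesc q P ≫ P.pr0 = D.T.map q :=
  P.pair_pr0 _ _ _

theorem hdesc_pr1 {E M : C} (q : E ⟶ M)
    (P : ChosenPB (D.p.app M) q) : D.hdesc q P ≫ P.pr1 = D.p.app E :=
  P.pair_pr1 _ _ _
end TangentCat

@[ext]
structure TangentFibre (D : TangentCat C) (N : HasNegatives D) {X : C} (A : C) (m : X ⟶ A) where
  hom : X ⟶ D.T.obj A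
  hom_p : hom ≫ D.p.app A = m

namespace TangentFibre

variable {D : TangentCat C} {N : HasNegatives D} {X A : C} {m : X ⟶ A}

instance : Add (TangentFibre D N A m) :=
  ⟨fun a b => ⟨(D.T2 A).pair a.hom b.hom (by rw [a.hom_p, b.hom_p]) ≫ D.add A, by
    rw [Category.assoc, D.add_p, ← Category.assoc, (D.T2 A).pair_pr0, a.hom_p]⟩⟩

instance : Zero (TangentFibre D N A m) :=
  ⟨⟨m ≫ D.zero.app A, by rw [Category.assoc, D.zero_p, Category.comp_id]⟩⟩

instance : Neg (TangentFibre D N A m) :=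
  ⟨fun a => ⟨a.hom ≫ N.neg A, by rw [Category.assoc, N.neg_p, a.hom_p]⟩⟩

theorem add_hom (a b : TangentFibre D N A m) :
    (a + b).hom = (D.T2 A).pair a.hom b.hom (by rw [a.hom_p, b.hom_p]) ≫ D.add A := rfl

theorem zero_hom : (0 : TangentFibre D N A m).hom = m ≫ D.zero.app A := rfl

theorem neg_hom (a : TangentFibre D N A m) : (-a).hom = a.hom ≫ N.neg A := rfl

instance : AddCommGroup (TangentFibre D N A m) :=
  { AddGroup.ofLeftAxioms
      (fun a b c => TangentFibre.ext (D.add_assoc' A a.hom b.hom c.hom _ _ _ _))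
      (fun a => TangentFibre.ext (by
        rw [add_hom, D.add_comm' A]
        refine (congrArg (· ≫ D.add A) ((D.T2 A).pair_congr rfl ?_)).trans
          (D.add_zero' A a.hom (by simp [D.zero_p]))
        rw [zero_hom, ← Category.assoc, a.hom_p]))
      (fun a => TangentFibre.ext (by
        rw [add_hom, D.add_comm' A]
        refine (N.neg_add A a.hom (by simp [N.neg_p])).trans ?_
        rw [zero_hom, ← Category.assoc, a.hom_p])) with
    add_comm := fun a b => TangentFibre.ext (D.add_comm' A a.hom b.hom _) }

theorem sub_hom (a b : TangentFibre D N A m) :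
    (a - b).hom = (D.T2 A).pair a.hom (b.hom ≫ N.neg A)
      (by rw [a.hom_p, Category.assoc, N.neg_p, b.hom_p]) ≫ D.add A := by
  rw [sub_eq_add_neg]
  rfl

theorem hadd_eq (a b : TangentFibre D N A m) : D.hadd a.hom b.hom = (a + b).hom := by
  rw [TangentCat.hadd, dif_pos (by rw [a.hom_p, b.hom_p])]
  rfl

theorem sub_eq (a b : TangentFibre D N A m) : D.sub N a.hom b.hom = (a - b).hom := by
  rw [TangentCat.sub, sub_eq_add_neg, ← neg_hom, hadd_eq]

def mapHom {A' : C} (g : A ⟶ A') : TangentFibre D N A m →+ TangentFibre D N A' (m ≫ g) :=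
  AddMonoidHom.mk'
    (fun a => ⟨a.hom ≫ D.T.map g, by
      rw [Category.assoc, D.p_nat, ← Category.assoc, a.hom_p]⟩)
    (fun a b => TangentFibre.ext (by
      change (a + b).hom ≫ D.T.map g = _
      rw [add_hom, add_hom, Category.assoc]
      exact D.add_nat g a.hom b.hom _ _))

@[simp]
theorem mapHom_hom {A' : C} (g : A ⟶ A') (a : TangentFibre D N A m) :
    (mapHom g a).hom = a.hom ≫ D.T.map g := rfl

end TangentFibre

namespace TangentCat

variable (D : TangentCat C)

theorem Tadd_right_cancel (N : HasNegatives D) {A X : C} {u u' v : X ⟶ D.T.obj (D.T.obj A)}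
    (h : u ≫ D.T.map (D.p.app A) = v ≫ D.T.map (D.p.app A))
    (h' : u' ≫ D.T.map (D.p.app A) = v ≫ D.T.map (D.p.app A))
    (he : (D.T2T A).pair u v h ≫ D.T.map (D.add A)
      = (D.T2T A).pair u' v h' ≫ D.T.map (D.add A)) :
    u = u' := by
  have hneg : D.add A ≫ D.p.app A = ((D.T2 A).pr1 ≫ N.neg A) ≫ D.p.app A := by
    rw [D.add_p, (D.T2 A).comm, Category.assoc, N.neg_p]
  -- `(x + y) - y = x`, read off at the generic pair `(x, y)`
  have sub_pr1 : (D.T2 A).pair (D.add A) ((D.T2 A).pr1 ≫ N.neg A) hneg ≫ D.add A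
      = (D.T2 A).pr0 := by
    let x : TangentFibre D N A ((D.T2 A).pr0 ≫ D.p.app A) := ⟨(D.T2 A).pr0, rfl⟩
    let y : TangentFibre D N A ((D.T2 A).pr0 ≫ D.p.app A) :=
      ⟨(D.T2 A).pr1, (D.T2 A).comm.symm⟩
    have hxy : (x + y).hom = D.add A := by
      change (D.T2 A).pair (D.T2 A).pr0 (D.T2 A).pr1 (D.T2 A).comm ≫ D.add A = _
      rw [(D.T2 A).pair_id, Category.id_comp]
    refine Eq.trans ?_ (congrArg TangentFibre.hom (add_sub_cancel_right x y))
    rw [TangentFibre.sub_hom]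
    exact congrArg (· ≫ D.add A) ((D.T2 A).pair_congr hxy.symm rfl)
  have unshear : ∀ (w : X ⟶ D.T.obj (D.T.obj A))
      (hw : w ≫ D.T.map (D.p.app A) = v ≫ D.T.map (D.p.app A)),
      w = (D.T2T A).pair ((D.T2T A).pair w v hw ≫ D.T.map (D.add A)) (v ≫ D.T.map (N.neg A))
        (by rw [Category.assoc, Category.assoc, ← D.T.map_comp, ← D.T.map_comp, D.add_p,
          N.neg_p, D.T.map_comp, ← Category.assoc, (D.T2T A).pair_pr0, hw])
        ≫ D.T.map (D.add A) := by
    intro w hw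
    conv_lhs => rw [← (D.T2T A).pair_pr0 w v hw, ← sub_pr1, D.T.map_comp, ← Category.assoc,
      (D.T2T A).map_pair]
    refine congrArg (· ≫ D.T.map (D.add A)) ((D.T2T A).pair_congr rfl ?_)
    rw [D.T.map_comp, ← Category.assoc, (D.T2T A).pair_pr1]
  rw [unshear u h, unshear u' h']
  exact congrArg (· ≫ D.T.map (D.add A)) ((D.T2T A).pair_congr he rfl)

/-- `(φ, φ₀)` is an additive bundle morphism from `p_A` to `T(p_A)` (e.g. `ℓ` and `T(g)c`). -/
structure IsAddHomToT {A : C} (φ : D.T.obj A ⟶ D.T.obj (D.T.obj A)) (φ₀ : A ⟶ D.T.obj A) :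
    Prop where
  comp_Tp : φ ≫ D.T.map (D.p.app A) = D.p.app A ≫ φ₀
  add_comp : ∀ {X : C} (x y : X ⟶ D.T.obj A) (h : x ≫ D.p.app A = y ≫ D.p.app A)
    (h' : (x ≫ φ) ≫ D.T.map (D.p.app A) = (y ≫ φ) ≫ D.T.map (D.p.app A)),
    (D.T2 A).pair x y h ≫ D.add A ≫ φ =
      (D.T2T A).pair (x ≫ φ) (y ≫ φ) h' ≫ D.T.map (D.add A)

theorem l_isAddHomToT (A : C) : D.IsAddHomToT (D.l.app A) (D.zero.app A) :=
  ⟨D.l_Tp A, fun x y h _ => D.l_add_eq x y h⟩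

theorem map_c_isAddHomToT {A : C} (g : A ⟶ D.T.obj A) :
    D.IsAddHomToT (D.T.map g ≫ D.c.app A) g := by
  refine ⟨by rw [Category.assoc, D.c_Tp, D.p_nat], fun x y h _ => ?_⟩
  rw [← Category.assoc (D.add A), ← Category.assoc,
    D.add_nat g x y h (by simp [D.p_nat, reassoc_of% h]), Category.assoc, D.add_c_eq]
  exact congrArg (· ≫ D.T.map (D.add A)) ((D.T2T A).pair_congr (by simp) (by simp))

variable {D}

theorem IsAddHomToT.comm_of_add_eq (N : HasNegatives D) {A : C}
    {φ : D.T.obj A ⟶ D.T.obj (D.T.obj A)} {φ₀ : A ⟶ D.T.obj A}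
    (hφ : D.IsAddHomToT φ φ₀)
    (a b c : TangentFibre D N A (D.p.app A)) (habc : a + b = c)
    (hb : b.hom ≫ φ = φ ≫ D.T.map b.hom) (hc : c.hom ≫ φ = φ ≫ D.T.map c.hom) :
    a.hom ≫ φ = φ ≫ D.T.map a.hom := by
  have hab : (a.hom ≫ φ) ≫ D.T.map (D.p.app A) = (b.hom ≫ φ) ≫ D.T.map (D.p.app A) := by
    rw [Category.assoc, hφ.comp_Tp, ← Category.assoc, a.hom_p, Category.assoc, hφ.comp_Tp,
      ← Category.assoc, b.hom_p]
  have hab' : (φ ≫ D.T.map a.hom) ≫ D.T.map (D.p.app A)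
      = (b.hom ≫ φ) ≫ D.T.map (D.p.app A) := by
    rw [hb, Category.assoc, Category.assoc, ← D.T.map_comp, ← D.T.map_comp, a.hom_p, b.hom_p]
  refine D.Tadd_right_cancel N hab hab' ?_
  calc (D.T2T A).pair (a.hom ≫ φ) (b.hom ≫ φ) hab ≫ D.T.map (D.add A)
      = c.hom ≫ φ := by rw [← habc, TangentFibre.add_hom, Category.assoc, hφ.add_comp]
    _ = φ ≫ D.T.map c.hom := hc
    _ = _ := by
      rw [← habc, TangentFibre.add_hom, D.T.map_comp, ← Category.assoc, (D.T2T A).map_pair]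
      exact congrArg (· ≫ D.T.map (D.add A)) ((D.T2T A).pair_congr rfl hb.symm)

end TangentCat

namespace IsVerticalConnection

variable {D : TangentCat C} {E M : C} {q : E ⟶ M} {lam : E ⟶ D.T.obj E} {K : D.T.obj E ⟶ E}

theorem lam_K (hK : IsVerticalConnection D q lam K) : lam ≫ K = 𝟙 E := hK.1

theorem K_q (hK : IsVerticalConnection D q lam K) : K ≫ q = D.p.app E ≫ q := hK.2.1

theorem K_lam_eq_l (hK : IsVerticalConnection D q lam K) :
    K ≫ lam = D.l.app E ≫ D.T.map K := hK.2.2.1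

theorem K_lam_eq_c (hK : IsVerticalConnection D q lam K) :
    K ≫ lam = D.T.map lam ≫ D.c.app E ≫ D.T.map K := hK.2.2.2

end IsVerticalConnection

theorem IsHorizontalConnection.comp {D : TangentCat C} {E M : C} {q : E ⟶ M}
    {lam : E ⟶ D.T.obj E} {P : ChosenPB (D.p.app M) q} {H : P.P ⟶ D.T.obj E}
    (hH : IsHorizontalConnection D q lam P H) {S : D.T.obj E ⟶ D.T.obj E}
    (hSq : S ≫ D.T.map q = D.T.map q) (hSp : S ≫ D.p.app E = D.p.app E)
    (hSl : S ≫ D.l.app E = D.l.app E ≫ D.T.map S)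
    (hSc : S ≫ D.T.map lam ≫ D.c.app E = D.T.map lam ≫ D.c.app E ≫ D.T.map S) :
    IsHorizontalConnection D q lam P (H ≫ S) := by
  obtain ⟨hq, hp, ⟨w, hw0, hw1, hwl⟩, ⟨w', hw'0, hw'1, hw'c⟩⟩ := hH
  refine ⟨by rw [Category.assoc, hSq, hq], by rw [Category.assoc, hSp, hp],
    ⟨w, hw0, hw1, ?_⟩, ⟨w', hw'0, hw'1, ?_⟩⟩
  · rw [Category.assoc, hSl, reassoc_of% hwl, ← D.T.map_comp]
  · rw [Category.assoc, hSc, reassoc_of% hw'c, ← D.T.map_comp]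

namespace DiffBundle

variable {D : TangentCat C} {E M : C} (B : DiffBundle D E M) {K : D.T.obj E ⟶ E}
  {R : D.T.obj E ⟶ B.E2.P}

theorem zero_addq {X : C} (f : X ⟶ E) (h : (f ≫ B.q ≫ B.zeroq) ≫ B.q = f ≫ B.q) :
    B.E2.pair (f ≫ B.q ≫ B.zeroq) f h ≫ B.addq = f := by
  rw [B.addq_comm]
  exact B.addq_zero f h.symm

theorem addq_lam_eq_add :
    B.addq ≫ B.lam = (D.T2 E).pair (B.E2.pr0 ≫ B.lam) (B.E2.pr1 ≫ B.lam)
    (by rw [Category.assoc, B.lam_p, reassoc_of% B.E2.comm, Category.assoc, B.lam_p])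
      ≫ D.add E := by
  rw [← B.lam_add2 _ _ B.E2.comm, B.E2.pair_id, Category.id_comp]

theorem TT_hom_ext {X : C} {w w' : X ⟶ D.T.obj (D.T.obj B.E2.P)}
    (h0 : w ≫ D.T.map (D.T.map B.E2.pr0) = w' ≫ D.T.map (D.T.map B.E2.pr0))
    (h1 : w ≫ D.T.map (D.T.map B.E2.pr1) = w' ≫ D.T.map (D.T.map B.E2.pr1)) : w = w' :=
  (B.TE2n 2).hom_ext w w' h0 h1

theorem addq_lam_eq_Tadd :
    B.addq ≫ B.lam = B.TE2.pair (B.E2.pr0 ≫ B.lam) (B.E2.pr1 ≫ B.lam)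
    (by rw [Category.assoc, B.lam_Tq, reassoc_of% B.E2.comm, Category.assoc, B.lam_Tq])
      ≫ D.T.map B.addq := by
  obtain ⟨w, hw0, hw1, hw⟩ := B.lam_add1 B.E2.pr0 B.E2.pr1 B.E2.comm
  rw [B.E2.pair_id, Category.id_comp] at hw
  rw [hw, B.TE2.eq_pair _ hw0 hw1]

theorem mu_eq : B.mu = B.TE2.pair (B.E2.pr0 ≫ B.lam) (B.E2.pr1 ≫ D.zero.app E)
    (by rw [Category.assoc, B.lam_Tq, Category.assoc, ← D.zero_nat, reassoc_of% B.E2.comm])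
      ≫ D.T.map B.addq := by
  obtain ⟨w, hw0, hw1, hmu⟩ := B.mu_spec
  rw [hmu, B.TE2.eq_pair _ hw0 hw1]

theorem mu_p : B.mu ≫ D.p.app E = B.E2.pr1 := by
  rw [mu_eq, Category.assoc, D.p_nat, ← Category.assoc, D.pair_p]
  refine (congrArg (· ≫ B.addq) (B.E2.pair_congr ?_ ?_)).trans (B.zero_addq B.E2.pr1 ?_)
  · rw [Category.assoc, B.lam_p, reassoc_of% B.E2.comm]
  · rw [Category.assoc, D.zero_p, Category.comp_id]
  · rw [Category.assoc, Category.assoc, B.zeroq_q, Category.comp_id]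

theorem mu_Tq : B.mu ≫ D.T.map B.q = B.E2.pr0 ≫ B.q ≫ D.zero.app M := by
  rw [mu_eq, Category.assoc, ← D.T.map_comp, B.addq_q, D.T.map_comp, ← Category.assoc,
    B.TE2.pair_pr0, Category.assoc, B.lam_Tq]

theorem lam_cancel (hK : IsVerticalConnection D B.q B.lam K) {X : C} {a b : X ⟶ E}
    (h : a ≫ B.lam = b ≫ B.lam) : a = b := by
  simpa [hK.lam_K] using congrArg (· ≫ K) h

theorem add_K (hK : IsVerticalConnection D B.q B.lam K) {X : C} (x y : X ⟶ D.T.obj E)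
    (h : x ≫ D.p.app E = y ≫ D.p.app E) :
    (D.T2 E).pair x y h ≫ D.add E ≫ K =
      B.E2.pair (x ≫ K) (y ≫ K) (by simp only [Category.assoc, hK.K_q, reassoc_of% h])
        ≫ B.addq := by
  apply B.lam_cancel hK
  have hl : (x ≫ D.l.app E) ≫ D.p.app (D.T.obj E)
      = (y ≫ D.l.app E) ≫ D.p.app (D.T.obj E) := by
    simp only [Category.assoc, D.l_p, reassoc_of% h]
  simp only [Category.assoc]
  rw [hK.K_lam_eq_l, ← Category.assoc (D.add E), ← Category.assoc, D.add_l_eq_add,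
    Category.assoc, D.add_nat K _ _ hl
      (by simp only [Category.assoc, D.p_nat, reassoc_of% (D.l_p E), reassoc_of% h]),
    B.lam_add2 _ _ _ (by simp only [Category.assoc, B.lam_p, reassoc_of% hK.K_q, reassoc_of% h])]
  congr 2 <;> rw [Category.assoc, Category.assoc, hK.K_lam_eq_l]

theorem Tadd_K (hK : IsVerticalConnection D B.q B.lam K) {X : C} (u v : X ⟶ D.T.obj E)
    (h : u ≫ D.T.map B.q = v ≫ D.T.map B.q) :
    B.TE2.pair u v h ≫ D.T.map B.addq ≫ K =
      B.E2.pair (u ≫ K) (v ≫ K) (by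
        simp only [Category.assoc, hK.K_q, ← D.p_nat, reassoc_of% h]) ≫ B.addq := by
  apply B.lam_cancel hK
  have hu : (u ≫ D.T.map B.lam) ≫ D.T.map (D.p.app E)
      = (v ≫ D.T.map B.lam) ≫ D.T.map (D.p.app E) := by
    simp only [Category.assoc, ← D.T.map_comp, B.lam_p]
    simp only [D.T.map_comp, reassoc_of% h]
  have hpair : B.TE2.pair u v h ≫ D.T.map ((D.T2 E).pair (B.E2.pr0 ≫ B.lam) (B.E2.pr1 ≫ B.lam)
      (by rw [Category.assoc, B.lam_p, reassoc_of% B.E2.comm, Category.assoc, B.lam_p]))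
      = (D.T2T E).pair (u ≫ D.T.map B.lam) (v ≫ D.T.map B.lam) hu := by
    rw [(D.T2T E).map_pair]
    congr 1 <;> rw [D.T.map_comp, ← Category.assoc]
    · rw [B.TE2.pair_pr0]
    · rw [B.TE2.pair_pr1]
  simp only [Category.assoc]
  rw [B.lam_add2 _ _ _ (by simp only [Category.assoc, B.lam_p, reassoc_of% hK.K_q,
      ← reassoc_of% (D.p_nat B.q), reassoc_of% h])]
  conv_lhs => rw [hK.K_lam_eq_c, ← Functor.map_comp_assoc, B.addq_lam_eq_add,
    Functor.map_comp_assoc, reassoc_of% hpair, reassoc_of% (D.c_add_eq _ _ hu), D.add_nat K _ _ _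
      (by simp only [Category.assoc, D.p_nat, reassoc_of% (D.c_p E), reassoc_of% hu])]
  congr 2 <;> simp only [Category.assoc, hK.K_lam_eq_c]

theorem zero_K (hK : IsVerticalConnection D B.q B.lam K) :
    D.zero.app E ≫ K = B.q ≫ B.zeroq := by
  have hl : (D.zero.app E ≫ K) ≫ B.lam = (D.zero.app E ≫ K) ≫ D.zero.app E := by
    rw [Category.assoc, hK.K_lam_eq_l, ← Category.assoc, D.l_zero, Category.assoc,
      ← D.T.map_comp, ← D.zero_nat]
  have hc : (D.zero.app E ≫ K) ≫ B.lam = B.lam ≫ D.T.map (D.zero.app E ≫ K) := by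
    rw [Category.assoc, hK.K_lam_eq_c, ← Category.assoc (D.zero.app E), ← D.zero_nat,
      Category.assoc, ← Category.assoc (D.zero.app _), D.zero_c, ← D.T.map_comp]
  calc D.zero.app E ≫ K = ((D.zero.app E ≫ K) ≫ D.zero.app E) ≫ D.p.app E := by
        rw [Category.assoc, D.zero_p, Category.comp_id]
    _ = B.q ≫ B.zeroq ≫ D.zero.app E ≫ K := by
        rw [← hl, hc, Category.assoc, D.p_nat, ← Category.assoc, B.lam_p, Category.assoc]
    _ = B.q ≫ B.zeroq := by
        rw [← Category.assoc B.zeroq, ← B.lam_zero2, Category.assoc, hK.lam_K, Category.comp_id]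

theorem mu_K (hK : IsVerticalConnection D B.q B.lam K) : B.mu ≫ K = B.E2.pr0 := by
  rw [mu_eq, Category.assoc, B.Tadd_K hK]
  refine (congrArg (· ≫ B.addq) (B.E2.pair_congr ?_ ?_)).trans
    (B.addq_zero B.E2.pr0 (by rw [Category.assoc, Category.assoc, B.zeroq_q, Category.comp_id]))
  · rw [Category.assoc, hK.lam_K, Category.comp_id]
  · rw [Category.assoc, B.zero_K hK, ← reassoc_of% B.E2.comm]

theorem sub_K (hK : IsVerticalConnection D B.q B.lam K) (N : HasNegatives D) {X : C}
    {m : X ⟶ E} (a b : TangentFibre D N E m) (hab : a.hom ≫ K = b.hom ≫ K) :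
    (a - b).hom ≫ K = m ≫ B.q ≫ B.zeroq := by
  calc (a - b).hom ≫ K = (b - b).hom ≫ K := by
        simp only [TangentFibre.sub_hom, Category.assoc]
        rw [B.add_K hK, B.add_K hK]
        congr 2
    _ = m ≫ B.q ≫ B.zeroq := by
        rw [sub_self, TangentFibre.zero_hom, Category.assoc, B.zero_K hK]

theorem zero_mu (h : (B.q ≫ B.zeroq) ≫ B.q = 𝟙 E ≫ B.q) :
    B.E2.pair (B.q ≫ B.zeroq) (𝟙 E) h ≫ B.mu = D.zero.app E := by
  have hzero : B.E2.pair (B.q ≫ B.zeroq) (𝟙 E) h ≫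
      B.TE2.pair (B.E2.pr0 ≫ B.lam) (B.E2.pr1 ≫ D.zero.app E)
        (by rw [Category.assoc, B.lam_Tq, Category.assoc, ← D.zero_nat, reassoc_of% B.E2.comm])
      = D.zero.app E ≫ D.T.map (B.E2.pair (B.q ≫ B.zeroq) (𝟙 E) h) := by
    rw [B.TE2.map_pair, B.TE2.comp_pair]
    congr 1
    · rw [← Category.assoc, B.E2.pair_pr0, Category.assoc, B.lam_zero2, ← D.zero_nat,
        Category.assoc]
    · rw [← Category.assoc, B.E2.pair_pr1, Category.id_comp, D.T.map_id, Category.comp_id]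
  rw [mu_eq, ← Category.assoc, hzero, Category.assoc, ← D.T.map_comp,
    (congrArg (· ≫ B.addq) (B.E2.pair_congr (Category.id_comp _).symm rfl)).trans
      (B.zero_addq (𝟙 E) (by simp [B.zeroq_q])), D.T.map_id, Category.comp_id]

theorem pair_K_p_mu (hK : IsVerticalConnection D B.q B.lam K) {X : C} (w : X ⟶ D.T.obj E)
    (hw : w ≫ D.T.map B.q = w ≫ D.p.app E ≫ B.q ≫ D.zero.app M) :
    B.E2.pair (w ≫ K) (w ≫ D.p.app E) (by rw [Category.assoc, hK.K_q, Category.assoc]) ≫ B.mu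
      = w := by
  have hmu := B.muLift_mu w hw
  rw [← B.E2.eq_pair _ (by rw [← B.mu_K hK, ← Category.assoc, hmu])
    (by rw [← B.mu_p, ← Category.assoc, hmu]), hmu]

theorem eq_of_Tq_of_K_of_p (hK : IsVerticalConnection D B.q B.lam K) (N : HasNegatives D)
    {X : C} {a b : X ⟶ D.T.obj E} (hq : a ≫ D.T.map B.q = b ≫ D.T.map B.q)
    (hk : a ≫ K = b ≫ K) (hp : a ≫ D.p.app E = b ≫ D.p.app E) : a = b := by
  let a' : TangentFibre D N E (a ≫ D.p.app E) := ⟨a, rfl⟩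
  let b' : TangentFibre D N E (a ≫ D.p.app E) := ⟨b, hp.symm⟩
  suffices a' - b' = 0 from congrArg TangentFibre.hom (sub_eq_zero.mp this)
  have hvert : TangentFibre.mapHom B.q (a' - b') = 0 := by
    rw [map_sub, sub_eq_zero]
    exact TangentFibre.ext hq
  have hvert' : (a' - b').hom ≫ D.T.map B.q
      = (a' - b').hom ≫ D.p.app E ≫ B.q ≫ D.zero.app M := by
    have h := congrArg TangentFibre.hom hvert
    rw [TangentFibre.mapHom_hom, TangentFibre.zero_hom] at h
    rw [h, ← Category.assoc, ← Category.assoc, (a' - b').hom_p, Category.assoc]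
  have hz : (B.q ≫ B.zeroq) ≫ B.q = 𝟙 E ≫ B.q := by
    rw [Category.assoc, B.zeroq_q, Category.comp_id, Category.id_comp]
  ext
  rw [← B.pair_K_p_mu hK (a' - b').hom hvert', TangentFibre.zero_hom, ← B.zero_mu hz]
  conv_rhs => rw [← Category.assoc, B.E2.comp_pair]
  exact congrArg (· ≫ B.mu) (B.E2.pair_congr (B.sub_K hK N a' b' hk)
    (by rw [(a' - b').hom_p, Category.comp_id]))

theorem R_mu (hR0 : R ≫ B.E2.pr0 = K) (hR1 : R ≫ B.E2.pr1 = D.p.app E) :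
    R ≫ B.mu = B.TE2.pair (K ≫ B.lam) (D.p.app E ≫ D.zero.app E)
      (by rw [← hR0, ← hR1, Category.assoc, Category.assoc, Category.assoc, B.lam_Tq,
        reassoc_of% B.E2.comm, ← D.zero_nat, Category.assoc]) ≫ D.T.map B.addq := by
  rw [mu_eq, ← Category.assoc, B.TE2.comp_pair]
  exact congrArg (· ≫ D.T.map B.addq) (B.TE2.pair_congr (by rw [← Category.assoc, hR0])
    (by rw [← Category.assoc, hR1]))

theorem R_mu_p (hR1 : R ≫ B.E2.pr1 = D.p.app E) : (R ≫ B.mu) ≫ D.p.app E = D.p.app E := by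
  rw [Category.assoc, B.mu_p, hR1]

theorem R_mu_Tq (hK : IsVerticalConnection D B.q B.lam K) (hR0 : R ≫ B.E2.pr0 = K) :
    (R ≫ B.mu) ≫ D.T.map B.q = (D.p.app E ≫ B.q) ≫ D.zero.app M := by
  rw [Category.assoc, B.mu_Tq, reassoc_of% hR0, reassoc_of% hK.K_q, Category.assoc]

theorem R_mu_K (hK : IsVerticalConnection D B.q B.lam K) (hR0 : R ≫ B.E2.pr0 = K) :
    (R ≫ B.mu) ≫ K = K := by
  rw [Category.assoc, B.mu_K hK, hR0]

theorem R_mu_l (hK : IsVerticalConnection D B.q B.lam K) (hR0 : R ≫ B.E2.pr0 = K)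
    (hR1 : R ≫ B.E2.pr1 = D.p.app E) :
    (R ≫ B.mu) ≫ D.l.app E = D.l.app E ≫ D.T.map (R ≫ B.mu) := by
  rw [B.R_mu hR0 hR1]
  set W := B.TE2.pair (K ≫ B.lam) (D.p.app E ≫ D.zero.app E) _
  have hW : W ≫ D.l.app B.E2.P = D.l.app E ≫ D.T.map W := by
    apply B.TT_hom_ext
    · conv_lhs => rw [Category.assoc, ← D.l_nat, ← Category.assoc, B.TE2.pair_pr0,
        Category.assoc, B.lam_l]
      conv_rhs => rw [Category.assoc, ← D.T.map_comp, B.TE2.pair_pr0, D.T.map_comp,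
        ← Category.assoc, ← hK.K_lam_eq_l, Category.assoc]
    · conv_lhs => rw [Category.assoc, ← D.l_nat, ← Category.assoc, B.TE2.pair_pr1,
        Category.assoc, D.l_zero]
      conv_rhs => rw [Category.assoc, ← D.T.map_comp, B.TE2.pair_pr1, D.T.map_comp,
        ← Category.assoc, D.l_Tp, Category.assoc]
  rw [Category.assoc, D.l_nat, ← Category.assoc, hW, Category.assoc, ← D.T.map_comp]

theorem R_mu_Tlam_c (hK : IsVerticalConnection D B.q B.lam K) (hR0 : R ≫ B.E2.pr0 = K)
    (hR1 : R ≫ B.E2.pr1 = D.p.app E) :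
    (R ≫ B.mu) ≫ D.T.map B.lam ≫ D.c.app E
      = D.T.map B.lam ≫ D.c.app E ≫ D.T.map (R ≫ B.mu) := by
  rw [B.R_mu hR0 hR1, Category.assoc, ← Functor.map_comp_assoc, B.addq_lam_eq_Tadd]
  set W := B.TE2.pair (K ≫ B.lam) (D.p.app E ≫ D.zero.app E) _
  set L := B.TE2.pair (B.E2.pr0 ≫ B.lam) (B.E2.pr1 ≫ B.lam) _
  have hW : W ≫ D.T.map L ≫ D.c.app B.E2.P = D.T.map B.lam ≫ D.c.app E ≫ D.T.map W := by
    apply B.TT_hom_ext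
    · conv_lhs => rw [Category.assoc, Category.assoc, ← D.c_nat, ← Functor.map_comp_assoc,
        B.TE2.pair_pr0, Functor.map_comp_assoc, ← Category.assoc W, B.TE2.pair_pr0,
        Category.assoc, ← reassoc_of% B.lam_l, D.l_c, B.lam_l]
      conv_rhs => rw [Category.assoc, Category.assoc, ← D.T.map_comp, B.TE2.pair_pr0,
        D.T.map_comp, ← reassoc_of% hK.K_lam_eq_c]
    · conv_lhs => rw [Category.assoc, Category.assoc, ← D.c_nat, ← Functor.map_comp_assoc,
        B.TE2.pair_pr1, Functor.map_comp_assoc, ← Category.assoc W, B.TE2.pair_pr1,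
        Category.assoc, ← reassoc_of% (D.zero_nat B.lam), D.zero_c]
      conv_rhs => rw [Category.assoc, Category.assoc, ← D.T.map_comp, B.TE2.pair_pr1,
        D.T.map_comp, reassoc_of% (D.c_Tp E), reassoc_of% (D.p_nat B.lam)]
  rw [Functor.map_comp_assoc, D.c_nat, reassoc_of% hW, ← D.T.map_comp]

theorem isConnection_of_comp_K (hK : IsVerticalConnection D B.q B.lam K) (N : HasNegatives D)
    {H : B.P.P ⟶ D.T.obj E} (hH : IsHorizontalConnection D B.q B.lam B.P H)
    (hHK : H ≫ K = B.P.pr1 ≫ B.q ≫ B.zeroq) (hR0 : R ≫ B.E2.pr0 = K)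
    (hR1 : R ≫ B.E2.pr1 = D.p.app E) : IsConnection B K H := by
  refine ⟨hK, hH, hHK, R, hR0, hR1, ?_⟩
  let V : TangentFibre D N E (D.p.app E) := ⟨R ≫ B.mu, B.R_mu_p hR1⟩
  let W : TangentFibre D N E (D.p.app E) :=
    ⟨D.hdesc B.q B.P ≫ H, by rw [Category.assoc, hH.2.1, D.hdesc_pr1]; rfl⟩
  refine (TangentFibre.hadd_eq V W).trans (B.eq_of_Tq_of_K_of_p hK N ?_ ?_ ?_)
  · have hV : TangentFibre.mapHom B.q V = 0 := TangentFibre.ext (B.R_mu_Tq hK hR0)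
    have hW : (TangentFibre.mapHom B.q W).hom = D.T.map B.q := by
      rw [TangentFibre.mapHom_hom, Category.assoc, hH.1, D.hdesc_pr0]
    rw [← TangentFibre.mapHom_hom, map_add, hV, zero_add, hW, Category.id_comp]
  · rw [TangentFibre.add_hom, Category.assoc, B.add_K hK, Category.id_comp]
    refine (congrArg (· ≫ B.addq) (B.E2.pair_congr (B.R_mu_K hK hR0) ?_)).trans
      (B.addq_zero K (by rw [Category.assoc, Category.assoc, B.zeroq_q, Category.comp_id]))
    rw [Category.assoc, hHK, reassoc_of% (D.hdesc_pr1 B.q B.P), reassoc_of% hK.K_q]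
  · rw [(V + W).hom_p, Category.id_comp]

theorem sub_R_mu_K (hK : IsVerticalConnection D B.q B.lam K) (N : HasNegatives D)
    (hR0 : R ≫ B.E2.pr0 = K) (hR1 : R ≫ B.E2.pr1 = D.p.app E) :
    D.sub N (𝟙 (D.T.obj E)) (R ≫ B.mu) ≫ K = D.p.app E ≫ B.q ≫ B.zeroq := by
  let one : TangentFibre D N E (D.p.app E) := ⟨𝟙 _, Category.id_comp _⟩
  let V : TangentFibre D N E (D.p.app E) := ⟨R ≫ B.mu, B.R_mu_p hR1⟩
  rw [TangentFibre.sub_eq one V]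
  exact B.sub_K hK N one V ((Category.id_comp K).trans (B.R_mu_K hK hR0).symm)

theorem isHorizontalConnection_comp_sub (hK : IsVerticalConnection D B.q B.lam K)
    (N : HasNegatives D) {J : B.P.P ⟶ D.T.obj E}
    (hJ : IsHorizontalConnection D B.q B.lam B.P J) (hR0 : R ≫ B.E2.pr0 = K)
    (hR1 : R ≫ B.E2.pr1 = D.p.app E) :
    IsHorizontalConnection D B.q B.lam B.P (J ≫ D.sub N (𝟙 (D.T.obj E)) (R ≫ B.mu)) := by
  let one : TangentFibre D N E (D.p.app E) := ⟨𝟙 _, Category.id_comp _⟩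
  let V : TangentFibre D N E (D.p.app E) := ⟨R ≫ B.mu, B.R_mu_p hR1⟩
  have hsum : (one - V) + V = one := sub_add_cancel one V
  rw [TangentFibre.sub_eq one V]
  refine hJ.comp ?_ (one - V).hom_p ?_ ?_
  · have hV : TangentFibre.mapHom B.q V = 0 := TangentFibre.ext (B.R_mu_Tq hK hR0)
    rw [← TangentFibre.mapHom_hom, map_sub, hV, sub_zero]
    exact Category.id_comp _
  · exact (D.l_isAddHomToT E).comm_of_add_eq N (one - V) V one hsum (B.R_mu_l hK hR0 hR1)
      (by simp [one])
  · rw [← Category.assoc (D.T.map B.lam)]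
    exact (D.map_c_isAddHomToT B.lam).comm_of_add_eq N (one - V) V one hsum
      (by rw [Category.assoc (D.T.map B.lam)]; exact B.R_mu_Tlam_c hK hR0 hR1) (by simp [one])

end DiffBundle

/-- In a tangent category with negatives, if `K` is a
vertical connection on a differential bundle `𝗊` which has some horizontal
connection `J`, then `J(1 − ⟨K,p⟩μ)` is a horizontal connection on `𝗊` and the
pair `(K, J(1 − ⟨K,p⟩μ))` is a connection on `𝗊`.  Here `R = ⟨K,p⟩`. -/
theorem stmt17 (D : TangentCat C) (N : HasNegatives D) {E M : C}
    (B : DiffBundle D E M) (K : D.T.obj E ⟶ E)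
    (hK : IsVerticalConnection D B.q B.lam K)
    (J : B.P.P ⟶ D.T.obj E) (hJ : IsHorizontalConnection D B.q B.lam B.P J)
    (R : D.T.obj E ⟶ B.E2.P) (hR0 : R ≫ B.E2.pr0 = K)
    (hR1 : R ≫ B.E2.pr1 = D.p.app E) :
    IsHorizontalConnection D B.q B.lam B.P
        (J ≫ D.sub N (𝟙 (D.T.obj E)) (R ≫ B.mu)) ∧
    IsConnection B K (J ≫ D.sub N (𝟙 (D.T.obj E)) (R ≫ B.mu)) := by
  have hH := B.isHorizontalConnection_comp_sub hK N hJ hR0 hR1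
  refine ⟨hH, B.isConnection_of_comp_K hK N hH ?_ hR0 hR1⟩
  rw [Category.assoc, B.sub_R_mu_K hK N hR0 hR1, ← Category.assoc, hJ.2.1]
end

section
/- In a tangent category with negatives, let (K, H) be an affine connection on M. Then the map F := RH − Uv : T²(M) → T²(M) satisfies FF = −1_{T²(M)} (the fibrewise negative of the identity in the additive bundle p_{T(M)} : T²(M) → T(M)), where R := ⟨K, p⟩ : T²(M) → T₂(M), U := ⟨T(p), p⟩ : T²(M) → T₂(M), and v := ⟨π₀ℓ, π₁0⟩T(+) : T₂(M) → T²(M). -/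
open CategoryTheory CategoryTheory.Limits

open scoped Classical

universe v u

variable {C : Type u} [Category.{v} C]

/-! ### Auxiliary lemmas for Statement 19 -/

section Stmt19Aux

lemma ChosenPB.pair_comp {A B Z : C} {f : A ⟶ Z} {g : B ⟶ Z} (PB : ChosenPB f g)
    {X Y : C} (x : Y ⟶ X) (u : X ⟶ A) (v : X ⟶ B) (h : u ≫ f = v ≫ g) :
    x ≫ PB.pair u v h = PB.pair (x ≫ u) (x ≫ v)
      (by simp only [Category.assoc, h]) := by
  apply PB.hom_ext
  · rw [Category.assoc, PB.pair_pr0, PB.pair_pr0]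
  · rw [Category.assoc, PB.pair_pr1, PB.pair_pr1]

lemma PBLift.pair_comp {T : C ⥤ C} {A B Z : C} {f : A ⟶ Z} {g : B ⟶ Z}
    {PB : ChosenPB f g} (L : PBLift T PB)
    {X Y : C} (x : Y ⟶ X) (u : X ⟶ T.obj A) (v : X ⟶ T.obj B)
    (h : u ≫ T.map f = v ≫ T.map g) :
    x ≫ L.pair u v h = L.pair (x ≫ u) (x ≫ v)
      (by simp only [Category.assoc, h]) := by
  apply L.hom_ext
  · rw [Category.assoc, L.pair_pr0, L.pair_pr0]
  · rw [Category.assoc, L.pair_pr1, L.pair_pr1]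

variable (D : TangentCat C)

lemma TangentCat.p_nat_s19 {A B : C} (f : A ⟶ B) :
    D.T.map f ≫ D.p.app B = D.p.app A ≫ f := by
  simpa using D.p.naturality f

lemma TangentCat.zero_nat_s19 {A B : C} (f : A ⟶ B) :
    f ≫ D.zero.app B = D.zero.app A ≫ D.T.map f := by
  simpa using D.zero.naturality f

lemma TangentCat.l_nat_s19 {A B : C} (f : A ⟶ B) :
    D.T.map f ≫ D.l.app B = D.l.app A ≫ D.T.map (D.T.map f) := by
  simpa using D.l.naturality f

lemma TangentCat.hadd_eq {X A : C} (f g : X ⟶ D.T.obj A)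
    (h : f ≫ D.p.app A = g ≫ D.p.app A) :
    D.hadd f g = (D.T2 A).pair f g h ≫ D.add A := by
  rw [TangentCat.hadd, dif_pos h]

lemma TangentCat.comp_hadd {Y X A : C} (x : Y ⟶ X) (f g : X ⟶ D.T.obj A)
    (h : f ≫ D.p.app A = g ≫ D.p.app A) :
    x ≫ D.hadd f g = D.hadd (x ≫ f) (x ≫ g) := by
  rw [D.hadd_eq f g h, D.hadd_eq (x ≫ f) (x ≫ g) (by simp only [Category.assoc, h]),
    ← Category.assoc, (D.T2 A).pair_comp]

lemma TangentCat.hadd_p {X A : C} (f g : X ⟶ D.T.obj A)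
    (h : f ≫ D.p.app A = g ≫ D.p.app A) :
    D.hadd f g ≫ D.p.app A = f ≫ D.p.app A := by
  rw [D.hadd_eq f g h, Category.assoc, D.add_p, ← Category.assoc, (D.T2 A).pair_pr0]

lemma TangentCat.hadd_comm {X A : C} (f g : X ⟶ D.T.obj A)
    (h : f ≫ D.p.app A = g ≫ D.p.app A) :
    D.hadd f g = D.hadd g f := by
  rw [D.hadd_eq f g h, D.hadd_eq g f h.symm, D.add_comm']

lemma TangentCat.hadd_zero {X A : C} (f : X ⟶ D.T.obj A) :
    D.hadd f (f ≫ D.p.app A ≫ D.zero.app A) = f := by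
  have h : f ≫ D.p.app A = (f ≫ D.p.app A ≫ D.zero.app A) ≫ D.p.app A := by
    simp [Category.assoc, D.zero_p]
  rw [D.hadd_eq _ _ h]
  exact D.add_zero' A f h

lemma TangentCat.zero_hadd {X A : C} (f : X ⟶ D.T.obj A) :
    D.hadd (f ≫ D.p.app A ≫ D.zero.app A) f = f := by
  rw [D.hadd_comm _ _ (by simp [Category.assoc, D.zero_p]), D.hadd_zero]

lemma TangentCat.hadd_assoc {X A : C} (f g k : X ⟶ D.T.obj A)
    (h1 : f ≫ D.p.app A = g ≫ D.p.app A) (h2 : g ≫ D.p.app A = k ≫ D.p.app A) :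
    D.hadd (D.hadd f g) k = D.hadd f (D.hadd g k) := by
  have hfg : ((D.T2 A).pair f g h1 ≫ D.add A) ≫ D.p.app A = k ≫ D.p.app A := by
    rw [Category.assoc, D.add_p, ← Category.assoc, (D.T2 A).pair_pr0, h1, h2]
  have hgk : f ≫ D.p.app A = ((D.T2 A).pair g k h2 ≫ D.add A) ≫ D.p.app A := by
    rw [Category.assoc, D.add_p, ← Category.assoc, (D.T2 A).pair_pr0, h1]
  rw [D.hadd_eq f g h1, D.hadd_eq g k h2, D.hadd_eq _ _ hfg, D.hadd_eq _ _ hgk]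
  exact D.add_assoc' A f g k h1 h2 hfg hgk

lemma TangentCat.pz_congr {X A : C} {f g : X ⟶ D.T.obj A}
    (h : f ≫ D.p.app A = g ≫ D.p.app A) :
    f ≫ D.p.app A ≫ D.zero.app A = g ≫ D.p.app A ≫ D.zero.app A := by
  rw [← Category.assoc, h, Category.assoc]

lemma TangentCat.hadd_neg (N : HasNegatives D) {X A : C} (f : X ⟶ D.T.obj A) :
    D.hadd f (f ≫ N.neg A) = f ≫ D.p.app A ≫ D.zero.app A := by
  have h : f ≫ D.p.app A = (f ≫ N.neg A) ≫ D.p.app A := by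
    rw [Category.assoc, N.neg_p]
  rw [D.hadd_eq _ _ h]
  exact N.neg_add A f h

lemma TangentCat.neg_unique (N : HasNegatives D) {X A : C} (f g : X ⟶ D.T.obj A)
    (h : f ≫ D.p.app A = g ≫ D.p.app A)
    (hsum : D.hadd f g = f ≫ D.p.app A ≫ D.zero.app A) :
    g = f ≫ N.neg A := by
  have hnp : (f ≫ N.neg A) ≫ D.p.app A = f ≫ D.p.app A := by
    rw [Category.assoc, N.neg_p]
  calc g = D.hadd (g ≫ D.p.app A ≫ D.zero.app A) g := (D.zero_hadd g).symm
    _ = D.hadd (D.hadd (f ≫ N.neg A) f) g := by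
        rw [D.hadd_comm (f ≫ N.neg A) f (by rw [hnp, h]), D.hadd_neg N f, D.pz_congr h]
    _ = D.hadd (f ≫ N.neg A) (D.hadd f g) := by
        rw [D.hadd_assoc _ f g (by rw [hnp]) h]
    _ = D.hadd (f ≫ N.neg A) ((f ≫ N.neg A) ≫ D.p.app A ≫ D.zero.app A) := by
        rw [hsum, D.pz_congr hnp.symm]
    _ = f ≫ N.neg A := D.hadd_zero _

lemma TangentCat.hadd_cancel (N : HasNegatives D) {X A : C} (a b x : X ⟶ D.T.obj A)
    (h1 : a ≫ D.p.app A = x ≫ D.p.app A) (h2 : b ≫ D.p.app A = x ≫ D.p.app A)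
    (he : D.hadd a x = D.hadd b x) : a = b := by
  have key : ∀ (u : X ⟶ D.T.obj A), u ≫ D.p.app A = x ≫ D.p.app A →
      D.hadd (D.hadd u x) (x ≫ N.neg A) = u := by
    intro u hu
    have hxn : x ≫ D.p.app A = (x ≫ N.neg A) ≫ D.p.app A := by
      rw [Category.assoc, N.neg_p]
    rw [D.hadd_assoc u x (x ≫ N.neg A) hu hxn, D.hadd_neg N x, D.pz_congr hu.symm,
      D.hadd_zero]
  rw [← key a h1, ← key b h2, he]

lemma TangentCat.zero_neg (N : HasNegatives D) (A : C) :
    D.zero.app A ≫ N.neg A = D.zero.app A := by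
  have h : D.zero.app A ≫ D.p.app A ≫ D.zero.app A = D.zero.app A := by
    rw [← Category.assoc, D.zero_p]; simp
  have h2 : D.hadd (D.zero.app A) (D.zero.app A ≫ D.p.app A ≫ D.zero.app A)
      = D.zero.app A := D.hadd_zero _
  rw [h] at h2
  exact (D.neg_unique N (D.zero.app A) (D.zero.app A) rfl (by rw [h2]; exact h.symm)).symm

lemma TangentCat.neg_hadd (N : HasNegatives D) {X A : C} (a b : X ⟶ D.T.obj A)
    (h : a ≫ D.p.app A = b ≫ D.p.app A) :
    D.hadd (a ≫ N.neg A) (b ≫ N.neg A) = D.hadd a b ≫ N.neg A := by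
  have hap : (a ≫ N.neg A) ≫ D.p.app A = a ≫ D.p.app A := by
    rw [Category.assoc, N.neg_p]
  have hbp : (b ≫ N.neg A) ≫ D.p.app A = b ≫ D.p.app A := by
    rw [Category.assoc, N.neg_p]
  have hs : D.hadd a b ≫ D.p.app A = a ≫ D.p.app A := D.hadd_p a b h
  refine (D.neg_unique N (D.hadd a b) (D.hadd (a ≫ N.neg A) (b ≫ N.neg A))
    (by rw [hs, D.hadd_p (a ≫ N.neg A) (b ≫ N.neg A) (by rw [hap, hbp, h]), hap]) ?_)
  calc D.hadd (D.hadd a b) (D.hadd (a ≫ N.neg A) (b ≫ N.neg A))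
      = D.hadd (D.hadd (D.hadd b a) (a ≫ N.neg A)) (b ≫ N.neg A) := by
        rw [D.hadd_comm a b h,
          D.hadd_assoc (D.hadd b a) (a ≫ N.neg A) (b ≫ N.neg A)
            (by rw [D.hadd_p b a h.symm, hap, h]) (by rw [hap, hbp, h])]
    _ = D.hadd (D.hadd b (a ≫ D.p.app A ≫ D.zero.app A)) (b ≫ N.neg A) := by
        rw [D.hadd_assoc b a (a ≫ N.neg A) h.symm (by rw [hap]), D.hadd_neg N a]
    _ = D.hadd b (b ≫ N.neg A) := by
        rw [D.pz_congr h, D.hadd_zero b]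
    _ = D.hadd a b ≫ D.p.app A ≫ D.zero.app A := by
        rw [D.hadd_neg N b, D.pz_congr (h.symm.trans hs.symm)]

lemma TangentCat.Tpair_zero {X A : C} (u : X ⟶ D.T.obj (D.T.obj A))
    (h : u ≫ D.T.map (D.p.app A)
      = (u ≫ D.T.map (D.p.app A) ≫ D.T.map (D.zero.app A)) ≫ D.T.map (D.p.app A)) :
    (D.T2T A).pair u (u ≫ D.T.map (D.p.app A) ≫ D.T.map (D.zero.app A)) h
      ≫ D.T.map (D.add A) = u := by
  have hh : 𝟙 (D.T.obj A) ≫ D.p.app A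
      = (𝟙 (D.T.obj A) ≫ D.p.app A ≫ D.zero.app A) ≫ D.p.app A := by
    simp [D.zero_p]
  have he : (D.T2 A).pair (𝟙 (D.T.obj A)) (𝟙 (D.T.obj A) ≫ D.p.app A ≫ D.zero.app A) hh
      ≫ D.add A = 𝟙 (D.T.obj A) := D.add_zero' A (𝟙 _) hh
  have h1 : u ≫ D.T.map ((D.T2 A).pair (𝟙 (D.T.obj A)) (𝟙 (D.T.obj A) ≫ D.p.app A ≫ D.zero.app A) hh)
      = (D.T2T A).pair u (u ≫ D.T.map (D.p.app A) ≫ D.T.map (D.zero.app A)) h := by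
    apply (D.T2T A).hom_ext
    · rw [Category.assoc, ← D.T.map_comp, (D.T2 A).pair_pr0, D.T.map_id, Category.comp_id,
        (D.T2T A).pair_pr0]
    · rw [Category.assoc, ← D.T.map_comp, (D.T2 A).pair_pr1, (D.T2T A).pair_pr1]
      simp [D.T.map_comp]
  rw [← h1, Category.assoc, ← D.T.map_comp, he, D.T.map_id, Category.comp_id]

lemma TangentCat.Tpair_comm {X A : C} (u v : X ⟶ D.T.obj (D.T.obj A))
    (h : u ≫ D.T.map (D.p.app A) = v ≫ D.T.map (D.p.app A)) :
    (D.T2T A).pair u v h ≫ D.T.map (D.add A)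
      = (D.T2T A).pair v u h.symm ≫ D.T.map (D.add A) := by
  have h1 : (D.T2 A).pair (D.T2 A).pr0 (D.T2 A).pr1 (D.T2 A).comm = 𝟙 ((D.T2 A).P) := by
    apply (D.T2 A).hom_ext
    · rw [(D.T2 A).pair_pr0, Category.id_comp]
    · rw [(D.T2 A).pair_pr1, Category.id_comp]
  have hs : (D.T2 A).pair (D.T2 A).pr1 (D.T2 A).pr0 (D.T2 A).comm.symm ≫ D.add A
      = D.add A := by
    rw [← D.add_comm' A _ _ (D.T2 A).comm, h1, Category.id_comp]
  have h2 : (D.T2T A).pair u v h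
        ≫ D.T.map ((D.T2 A).pair (D.T2 A).pr1 (D.T2 A).pr0 (D.T2 A).comm.symm)
      = (D.T2T A).pair v u h.symm := by
    apply (D.T2T A).hom_ext
    · rw [Category.assoc, ← D.T.map_comp, (D.T2 A).pair_pr0, (D.T2T A).pair_pr1,
        (D.T2T A).pair_pr0]
    · rw [Category.assoc, ← D.T.map_comp, (D.T2 A).pair_pr1, (D.T2T A).pair_pr0,
        (D.T2T A).pair_pr1]
  calc (D.T2T A).pair u v h ≫ D.T.map (D.add A)
      = (D.T2T A).pair u v h
          ≫ D.T.map ((D.T2 A).pair (D.T2 A).pr1 (D.T2 A).pr0 (D.T2 A).comm.symm ≫ D.add A) := by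
        rw [hs]
    _ = ((D.T2T A).pair u v h
          ≫ D.T.map ((D.T2 A).pair (D.T2 A).pr1 (D.T2 A).pr0 (D.T2 A).comm.symm))
          ≫ D.T.map (D.add A) := by rw [D.T.map_comp, Category.assoc]
    _ = (D.T2T A).pair v u h.symm ≫ D.T.map (D.add A) := by rw [h2]

lemma TangentCat.Tsum_c {X A : C} (u v : X ⟶ D.T.obj (D.T.obj A))
    (h : u ≫ D.T.map (D.p.app A) = v ≫ D.T.map (D.p.app A))
    (h' : (u ≫ D.c.app A) ≫ D.p.app (D.T.obj A) = (v ≫ D.c.app A) ≫ D.p.app (D.T.obj A)) :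
    (D.T2T A).pair u v h ≫ D.T.map (D.add A) ≫ D.c.app A
      = (D.T2 (D.T.obj A)).pair (u ≫ D.c.app A) (v ≫ D.c.app A) h' ≫ D.add (D.T.obj A) := by
  obtain ⟨w, hw0, hw1, hw⟩ := D.c_add A u v h h'
  have hwid : w = (D.T2T A).pair u v h := by
    apply (D.T2T A).hom_ext
    · rw [hw0, (D.T2T A).pair_pr0]
    · rw [hw1, (D.T2T A).pair_pr1]
  rw [← hwid, hw]

lemma TangentCat.l_p_s19 (A : C) :
    D.l.app A ≫ D.p.app (D.T.obj A) = D.p.app A ≫ D.zero.app A := by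
  conv_lhs => rw [← D.l_c A]
  rw [Category.assoc, D.c_p, D.l_Tp]

lemma TangentCat.pair_vmu_l (A : C)
    (h : 𝟙 (D.T.obj A) ≫ D.p.app A = (D.p.app A ≫ D.zero.app A) ≫ D.p.app A) :
    (D.T2 A).pair (𝟙 (D.T.obj A)) (D.p.app A ≫ D.zero.app A) h ≫ D.vmu A
      = D.l.app A := by
  obtain ⟨w, hw0, hw1, hw⟩ := D.vmu_spec A
  have hz : D.l.app A ≫ D.T.map (D.p.app A)
      = (D.l.app A ≫ D.T.map (D.p.app A) ≫ D.T.map (D.zero.app A)) ≫ D.T.map (D.p.app A) := by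
    simp only [Category.assoc, ← D.T.map_comp, D.zero_p]
    simp
  have h1 : (D.T2 A).pair (𝟙 (D.T.obj A)) (D.p.app A ≫ D.zero.app A) h ≫ w
      = (D.T2T A).pair (D.l.app A)
          (D.l.app A ≫ D.T.map (D.p.app A) ≫ D.T.map (D.zero.app A)) hz := by
    apply (D.T2T A).hom_ext
    · rw [Category.assoc, hw0, ← Category.assoc, (D.T2 A).pair_pr0, Category.id_comp,
        (D.T2T A).pair_pr0]
    · rw [Category.assoc, hw1, ← Category.assoc, (D.T2 A).pair_pr1, (D.T2T A).pair_pr1,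
        ← Category.assoc, D.l_Tp, Category.assoc, Category.assoc]
      rw [D.zero_nat_s19 (D.zero.app A)]
      rfl
  rw [hw, ← Category.assoc, h1, D.Tpair_zero]

lemma TangentCat.l_mono {X A : C} (a b : X ⟶ D.T.obj A)
    (h : a ≫ D.l.app A = b ≫ D.l.app A) : a = b := by
  have hp : 𝟙 (D.T.obj A) ≫ D.p.app A = (D.p.app A ≫ D.zero.app A) ≫ D.p.app A := by
    simp [D.zero_p]
  have h1 : (a ≫ (D.T2 A).pair (𝟙 _) (D.p.app A ≫ D.zero.app A) hp) ≫ D.vmu A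
      = (b ≫ (D.T2 A).pair (𝟙 _) (D.p.app A ≫ D.zero.app A) hp) ≫ D.vmu A := by
    simp only [Category.assoc]
    rw [D.pair_vmu_l A hp, h]
  have h2 := D.vmu_mono _ _ h1
  have h3 : (a ≫ (D.T2 A).pair (𝟙 _) (D.p.app A ≫ D.zero.app A) hp) ≫ (D.T2 A).pr0
      = (b ≫ (D.T2 A).pair (𝟙 _) (D.p.app A ≫ D.zero.app A) hp) ≫ (D.T2 A).pr0 := by
    rw [h2]
  simpa [Category.assoc, (D.T2 A).pair_pr0] using h3

lemma TangentCat.comp_l {X A : C} (x : X ⟶ D.T.obj A)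
    (h : x ≫ D.p.app A = (x ≫ D.p.app A ≫ D.zero.app A) ≫ D.p.app A) :
    x ≫ D.l.app A = (D.T2 A).pair x (x ≫ D.p.app A ≫ D.zero.app A) h ≫ D.vmu A := by
  have hp : 𝟙 (D.T.obj A) ≫ D.p.app A = (D.p.app A ≫ D.zero.app A) ≫ D.p.app A := by
    simp [D.zero_p]
  rw [← D.pair_vmu_l A hp, ← Category.assoc, (D.T2 A).pair_comp]
  congr 1
  apply (D.T2 A).hom_ext
  · rw [(D.T2 A).pair_pr0, (D.T2 A).pair_pr0, Category.comp_id]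
  · rw [(D.T2 A).pair_pr1, (D.T2 A).pair_pr1]

lemma TangentCat.comp_zero_vmu {X A : C} (x : X ⟶ D.T.obj A)
    (h : (x ≫ D.p.app A ≫ D.zero.app A) ≫ D.p.app A = x ≫ D.p.app A) :
    x ≫ D.zero.app (D.T.obj A)
      = (D.T2 A).pair (x ≫ D.p.app A ≫ D.zero.app A) x h ≫ D.vmu A := by
  obtain ⟨w, hw0, hw1, hw⟩ := D.vmu_spec A
  have hx : (x ≫ D.zero.app (D.T.obj A)) ≫ D.T.map (D.p.app A)
      = ((x ≫ D.zero.app (D.T.obj A)) ≫ D.T.map (D.p.app A) ≫ D.T.map (D.zero.app A))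
          ≫ D.T.map (D.p.app A) := by
    simp only [Category.assoc, ← D.T.map_comp, D.zero_p]
    simp
  have h1 : (D.T2 A).pair (x ≫ D.p.app A ≫ D.zero.app A) x h ≫ w
      = (D.T2T A).pair
          ((x ≫ D.zero.app (D.T.obj A)) ≫ D.T.map (D.p.app A) ≫ D.T.map (D.zero.app A))
          (x ≫ D.zero.app (D.T.obj A)) hx.symm := by
    apply (D.T2T A).hom_ext
    · rw [Category.assoc, hw0, ← Category.assoc, (D.T2 A).pair_pr0, (D.T2T A).pair_pr0]
      simp only [Category.assoc]
      slice_lhs 3 4 => rw [D.l_zero]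
      slice_rhs 2 3 => rw [← D.zero_nat_s19 (D.p.app A)]
      simp
    · rw [Category.assoc, hw1, ← Category.assoc, (D.T2 A).pair_pr1, (D.T2T A).pair_pr1]
  rw [hw, ← Category.assoc, h1, D.Tpair_comm, D.Tpair_zero]

lemma TangentCat.vmu_p (A : C) :
    D.vmu A ≫ D.p.app (D.T.obj A) = (D.T2 A).pr1 := by
  obtain ⟨w, hw0, hw1, hw⟩ := D.vmu_spec A
  have hh : ((D.T2 A).pr1 ≫ D.p.app A ≫ D.zero.app A) ≫ D.p.app A
      = (D.T2 A).pr1 ≫ D.p.app A := by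
    simp [D.zero_p]
  have h1 : w ≫ D.p.app ((D.T2 A).P)
      = (D.T2 A).pair ((D.T2 A).pr1 ≫ D.p.app A ≫ D.zero.app A) (D.T2 A).pr1 hh := by
    apply (D.T2 A).hom_ext
    · rw [Category.assoc, ← D.p_nat_s19 (D.T2 A).pr0, ← Category.assoc, hw0, (D.T2 A).pair_pr0,
        Category.assoc, D.l_p_s19, ← Category.assoc, (D.T2 A).comm, Category.assoc]
    · rw [Category.assoc, ← D.p_nat_s19 (D.T2 A).pr1, ← Category.assoc, hw1, (D.T2 A).pair_pr1,
        Category.assoc, D.zero_p, Category.comp_id]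
  rw [hw, Category.assoc, D.p_nat_s19 (D.add A), ← Category.assoc, h1, ← D.hadd_eq _ _ hh]
  exact D.zero_hadd (D.T2 A).pr1

lemma TangentCat.vmu_Tp (A : C) :
    D.vmu A ≫ D.T.map (D.p.app A) = (D.T2 A).pr0 ≫ D.p.app A ≫ D.zero.app A := by
  obtain ⟨w, hw0, hw1, hw⟩ := D.vmu_spec A
  rw [hw, Category.assoc, ← D.T.map_comp, D.add_p, D.T.map_comp, ← Category.assoc, hw0,
    Category.assoc, D.l_Tp]

lemma TangentCat.hadd_Tmap {X A B : C} (f : A ⟶ B) (u v : X ⟶ D.T.obj A)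
    (h : u ≫ D.p.app A = v ≫ D.p.app A) :
    D.hadd u v ≫ D.T.map f = D.hadd (u ≫ D.T.map f) (v ≫ D.T.map f) := by
  have h' : (u ≫ D.T.map f) ≫ D.p.app B = (v ≫ D.T.map f) ≫ D.p.app B := by
    simp only [Category.assoc, D.p_nat_s19]
    rw [← Category.assoc, h, Category.assoc]
  rw [D.hadd_eq u v h, D.hadd_eq _ _ h', Category.assoc, D.add_nat f u v h h']

lemma TangentCat.hadd_l {X A : C} (u v : X ⟶ D.T.obj A)
    (h : u ≫ D.p.app A = v ≫ D.p.app A) :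
    D.hadd u v ≫ D.l.app A = D.hadd (u ≫ D.l.app A) (v ≫ D.l.app A) := by
  obtain ⟨w, hw0, hw1, hw⟩ := D.l_add A u v h
  have hcomp : (u ≫ D.l.app A) ≫ D.T.map (D.p.app A)
      = (v ≫ D.l.app A) ≫ D.T.map (D.p.app A) := by
    simp only [Category.assoc, D.l_Tp]
    rw [← Category.assoc, h, Category.assoc]
  have hc'' : (u ≫ D.l.app A) ≫ D.p.app (D.T.obj A)
      = (v ≫ D.l.app A) ≫ D.p.app (D.T.obj A) := by
    simp only [Category.assoc, D.l_p_s19]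
    rw [← Category.assoc, h, Category.assoc]
  have hc' : ((u ≫ D.l.app A) ≫ D.c.app A) ≫ D.p.app (D.T.obj A)
      = ((v ≫ D.l.app A) ≫ D.c.app A) ≫ D.p.app (D.T.obj A) := by
    simp only [Category.assoc, D.l_c]
    simpa only [Category.assoc] using hc''
  have hwid : w = (D.T2T A).pair (u ≫ D.l.app A) (v ≫ D.l.app A) hcomp := by
    apply (D.T2T A).hom_ext
    · rw [hw0, (D.T2T A).pair_pr0]
    · rw [hw1, (D.T2T A).pair_pr1]
  have e1 : D.hadd u v ≫ D.l.app A
      = (D.T2T A).pair (u ≫ D.l.app A) (v ≫ D.l.app A) hcomp ≫ D.T.map (D.add A) := by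
    rw [D.hadd_eq u v h, Category.assoc, hw, hwid]
  have hpair : (D.T2 (D.T.obj A)).pair ((u ≫ D.l.app A) ≫ D.c.app A)
        ((v ≫ D.l.app A) ≫ D.c.app A) hc'
      = (D.T2 (D.T.obj A)).pair (u ≫ D.l.app A) (v ≫ D.l.app A) hc'' := by
    apply (D.T2 (D.T.obj A)).hom_ext
    · rw [(D.T2 (D.T.obj A)).pair_pr0, (D.T2 (D.T.obj A)).pair_pr0, Category.assoc, D.l_c]
    · rw [(D.T2 (D.T.obj A)).pair_pr1, (D.T2 (D.T.obj A)).pair_pr1, Category.assoc, D.l_c]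
  calc D.hadd u v ≫ D.l.app A
      = (D.hadd u v ≫ D.l.app A) ≫ D.c.app A := by rw [Category.assoc, D.l_c]
    _ = (D.T2T A).pair (u ≫ D.l.app A) (v ≫ D.l.app A) hcomp
          ≫ D.T.map (D.add A) ≫ D.c.app A := by rw [e1, Category.assoc]
    _ = (D.T2 (D.T.obj A)).pair ((u ≫ D.l.app A) ≫ D.c.app A)
          ((v ≫ D.l.app A) ≫ D.c.app A) hc' ≫ D.add (D.T.obj A) :=
        D.Tsum_c _ _ hcomp hc'
    _ = (D.T2 (D.T.obj A)).pair (u ≫ D.l.app A) (v ≫ D.l.app A) hc''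
          ≫ D.add (D.T.obj A) := by rw [hpair]
    _ = D.hadd (u ≫ D.l.app A) (v ≫ D.l.app A) := (D.hadd_eq _ _ hc'').symm

lemma TangentCat.neg_Tmap (N : HasNegatives D) {A B : C} (f : A ⟶ B) :
    N.neg A ≫ D.T.map f = D.T.map f ≫ N.neg B := by
  refine D.neg_unique N (D.T.map f) (N.neg A ≫ D.T.map f)
    (by rw [Category.assoc, D.p_nat_s19 f, ← Category.assoc, N.neg_p, ← D.p_nat_s19 f]) ?_
  have e0 : D.hadd (𝟙 (D.T.obj A)) (N.neg A) = D.p.app A ≫ D.zero.app A := by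
    have h1 := D.hadd_neg N (𝟙 (D.T.obj A))
    simpa using h1
  have e1 := D.hadd_Tmap f (𝟙 _) (N.neg A) (by rw [N.neg_p]; simp)
  rw [e0] at e1
  simp only [Category.id_comp] at e1
  rw [← e1, Category.assoc, ← D.zero_nat_s19 f, ← Category.assoc, ← D.p_nat_s19 f, Category.assoc]

lemma ChosenPB.pair_congr_s19 {A B Z : C} {f : A ⟶ Z} {g : B ⟶ Z} (PB : ChosenPB f g)
    {X : C} {u u' : X ⟶ A} {v v' : X ⟶ B} (hu : u = u') (hv : v = v')
    (h : u ≫ f = v ≫ g) (h' : u' ≫ f = v' ≫ g) :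
    PB.pair u v h = PB.pair u' v' h' := by
  apply PB.hom_ext
  · rw [PB.pair_pr0, PB.pair_pr0, hu]
  · rw [PB.pair_pr1, PB.pair_pr1, hv]

lemma TangentCat.hadd_zz {X A : C} (b : X ⟶ A) :
    D.hadd (b ≫ D.zero.app A) (b ≫ D.zero.app A) = b ≫ D.zero.app A := by
  have h : b ≫ D.zero.app A = (b ≫ D.zero.app A) ≫ D.p.app A ≫ D.zero.app A := by
    rw [Category.assoc, ← Category.assoc (D.zero.app A), D.zero_p]
    simp
  nth_rewrite 2 [h]
  exact D.hadd_zero _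

lemma TangentCat.K_zero {M : C} (K : D.T.obj (D.T.obj M) ⟶ D.T.obj M)
    (hKp : K ≫ D.p.app M = D.p.app (D.T.obj M) ≫ D.p.app M)
    (hKl : K ≫ D.l.app M = D.l.app (D.T.obj M) ≫ D.T.map K) :
    D.zero.app (D.T.obj M) ≫ K = D.p.app M ≫ D.zero.app M := by
  have h1 : (D.zero.app (D.T.obj M) ≫ K) ≫ D.l.app M
      = (D.zero.app (D.T.obj M) ≫ K) ≫ D.zero.app (D.T.obj M) := by
    rw [Category.assoc, hKl, ← Category.assoc, D.l_zero, Category.assoc, ← D.T.map_comp]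
    exact (D.zero_nat_s19 (D.zero.app (D.T.obj M) ≫ K)).symm
  have h2 : (D.zero.app (D.T.obj M) ≫ K) ≫ D.p.app M
      = ((D.zero.app (D.T.obj M) ≫ K) ≫ D.p.app M ≫ D.zero.app M) ≫ D.p.app M := by
    simp [D.zero_p]
  rw [D.comp_l _ h2, D.comp_zero_vmu _ h2.symm] at h1
  have h5 := D.vmu_mono _ _ h1
  have h6 : D.zero.app (D.T.obj M) ≫ K
      = (D.zero.app (D.T.obj M) ≫ K) ≫ D.p.app M ≫ D.zero.app M := by
    have h7 := congrArg (fun t => t ≫ (D.T2 M).pr0) h5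
    simpa only [(D.T2 M).pair_pr0] using h7
  have h8 : (D.zero.app (D.T.obj M) ≫ K) ≫ D.p.app M = D.p.app M := by
    rw [Category.assoc, hKp, ← Category.assoc, D.zero_p]
    simp
  rw [h6, ← Category.assoc, h8]

lemma TangentCat.K_hadd {M X : C} (K : D.T.obj (D.T.obj M) ⟶ D.T.obj M)
    (hKp : K ≫ D.p.app M = D.p.app (D.T.obj M) ≫ D.p.app M)
    (hKl : K ≫ D.l.app M = D.l.app (D.T.obj M) ≫ D.T.map K)
    (u v : X ⟶ D.T.obj (D.T.obj M))
    (h : u ≫ D.p.app (D.T.obj M) = v ≫ D.p.app (D.T.obj M)) :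
    D.hadd u v ≫ K = D.hadd (u ≫ K) (v ≫ K) := by
  have hKcomp : (u ≫ K) ≫ D.p.app M = (v ≫ K) ≫ D.p.app M := by
    rw [Category.assoc, hKp, Category.assoc, hKp, ← Category.assoc, h, Category.assoc]
  apply D.l_mono
  calc (D.hadd u v ≫ K) ≫ D.l.app M
      = D.hadd u v ≫ D.l.app (D.T.obj M) ≫ D.T.map K := by rw [Category.assoc, hKl]
    _ = D.hadd (u ≫ D.l.app (D.T.obj M)) (v ≫ D.l.app (D.T.obj M)) ≫ D.T.map K := by
        rw [← Category.assoc, D.hadd_l u v h]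
    _ = D.hadd (u ≫ D.l.app (D.T.obj M) ≫ D.T.map K) (v ≫ D.l.app (D.T.obj M) ≫ D.T.map K) := by
        rw [D.hadd_Tmap K _ _ (by
          simp only [Category.assoc, D.l_p_s19]
          rw [← Category.assoc, h, Category.assoc])]
        simp only [Category.assoc]
    _ = D.hadd (u ≫ K ≫ D.l.app M) (v ≫ K ≫ D.l.app M) := by rw [hKl]
    _ = D.hadd ((u ≫ K) ≫ D.l.app M) ((v ≫ K) ≫ D.l.app M) := by
        simp only [Category.assoc]
    _ = D.hadd (u ≫ K) (v ≫ K) ≫ D.l.app M := (D.hadd_l _ _ hKcomp).symm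

lemma TangentCat.K_neg (N : HasNegatives D) {M : C} (K : D.T.obj (D.T.obj M) ⟶ D.T.obj M)
    (hKp : K ≫ D.p.app M = D.p.app (D.T.obj M) ≫ D.p.app M)
    (hKl : K ≫ D.l.app M = D.l.app (D.T.obj M) ≫ D.T.map K) :
    N.neg (D.T.obj M) ≫ K = K ≫ N.neg M := by
  refine D.neg_unique N K (N.neg (D.T.obj M) ≫ K)
    (by rw [Category.assoc, hKp, ← Category.assoc, N.neg_p]) ?_
  have e0 : D.hadd (𝟙 (D.T.obj (D.T.obj M))) (N.neg (D.T.obj M))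
      = D.p.app (D.T.obj M) ≫ D.zero.app (D.T.obj M) := by
    have h1 := D.hadd_neg N (𝟙 (D.T.obj (D.T.obj M)))
    simpa using h1
  have e1 := D.K_hadd K hKp hKl (𝟙 _) (N.neg (D.T.obj M)) (by rw [N.neg_p]; simp)
  rw [e0] at e1
  simp only [Category.id_comp] at e1
  rw [← e1, Category.assoc, D.K_zero K hKp hKl, ← Category.assoc, ← Category.assoc, hKp]

lemma TangentCat.Wcomp (M : C) :
    ((D.T2 M).pr0 ≫ D.l.app M) ≫ D.T.map (D.p.app M)
      = ((D.T2 M).pr1 ≫ D.zero.app (D.T.obj M)) ≫ D.T.map (D.p.app M) := by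
  rw [Category.assoc, D.l_Tp, Category.assoc, ← D.zero_nat_s19 (D.p.app M)]
  simp only [← Category.assoc]
  rw [(D.T2 M).comm]
  simp

lemma TangentCat.H_l {M : C} (H : (D.T2 M).P ⟶ D.T.obj (D.T.obj M))
    (hH3 : ∃ w : (D.T2 M).P ⟶ D.T.obj (D.T2 M).P,
      w ≫ D.T.map (D.T2 M).pr0 = (D.T2 M).pr0 ≫ D.l.app M ∧
      w ≫ D.T.map (D.T2 M).pr1 = (D.T2 M).pr1 ≫ D.zero.app (D.T.obj M) ∧
      H ≫ D.l.app (D.T.obj M) = w ≫ D.T.map H) :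
    H ≫ D.l.app (D.T.obj M)
      = (D.T2T M).pair ((D.T2 M).pr0 ≫ D.l.app M)
          ((D.T2 M).pr1 ≫ D.zero.app (D.T.obj M)) (D.Wcomp M) ≫ D.T.map H := by
  obtain ⟨w, hw0, hw1, hw⟩ := hH3
  have hwid : w = (D.T2T M).pair ((D.T2 M).pr0 ≫ D.l.app M)
      ((D.T2 M).pr1 ≫ D.zero.app (D.T.obj M)) (D.Wcomp M) := by
    apply (D.T2T M).hom_ext
    · rw [hw0, (D.T2T M).pair_pr0]
    · rw [hw1, (D.T2T M).pair_pr1]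
  rw [hw, hwid]

lemma TangentCat.H_zero {M X : C} (H : (D.T2 M).P ⟶ D.T.obj (D.T.obj M))
    (hH2 : H ≫ D.p.app (D.T.obj M) = (D.T2 M).pr1)
    (hHl : H ≫ D.l.app (D.T.obj M)
      = (D.T2T M).pair ((D.T2 M).pr0 ≫ D.l.app M)
          ((D.T2 M).pr1 ≫ D.zero.app (D.T.obj M)) (D.Wcomp M) ≫ D.T.map H)
    (b : X ⟶ D.T.obj M)
    (hb : (b ≫ D.p.app M ≫ D.zero.app M) ≫ D.p.app M = b ≫ D.p.app M) :
    (D.T2 M).pair (b ≫ D.p.app M ≫ D.zero.app M) b hb ≫ H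
      = b ≫ D.zero.app (D.T.obj M) := by
  have hzeta : (D.p.app M ≫ D.zero.app M) ≫ D.p.app M = 𝟙 (D.T.obj M) ≫ D.p.app M := by
    simp [D.zero_p]
  have hstep1 : (D.T2 M).pair (b ≫ D.p.app M ≫ D.zero.app M) b hb
        ≫ (D.T2T M).pair ((D.T2 M).pr0 ≫ D.l.app M)
            ((D.T2 M).pr1 ≫ D.zero.app (D.T.obj M)) (D.Wcomp M)
      = (b ≫ D.zero.app (D.T.obj M))
          ≫ D.T.map ((D.T2 M).pair (D.p.app M ≫ D.zero.app M) (𝟙 _) hzeta) := by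
    apply (D.T2T M).hom_ext
    · simp only [Category.assoc]
      rw [(D.T2T M).pair_pr0,
        reassoc_of% ((D.T2 M).pair_pr0 (b ≫ D.p.app M ≫ D.zero.app M) b hb),
        ← D.T.map_comp, (D.T2 M).pair_pr0]
      try simp only [Category.assoc]
      slice_lhs 3 4 => rw [D.l_zero]
      rw [← D.zero_nat_s19 (D.p.app M ≫ D.zero.app M)]
      slice_rhs 3 4 => rw [D.zero_nat_s19 (D.zero.app M)]
      try simp
      try rfl
    · simp only [Category.assoc]
      rw [(D.T2T M).pair_pr1,
        reassoc_of% ((D.T2 M).pair_pr1 (b ≫ D.p.app M ≫ D.zero.app M) b hb),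
        ← D.T.map_comp, (D.T2 M).pair_pr1, D.T.map_id, Category.comp_id]
  have hxi : ((D.T2 M).pair (b ≫ D.p.app M ≫ D.zero.app M) b hb ≫ H) ≫ D.p.app (D.T.obj M)
      = b := by
    rw [Category.assoc, hH2, (D.T2 M).pair_pr1]
  have hbzeta : b ≫ (D.T2 M).pair (D.p.app M ≫ D.zero.app M) (𝟙 _) hzeta
      = (D.T2 M).pair (b ≫ D.p.app M ≫ D.zero.app M) b hb := by
    rw [(D.T2 M).pair_comp]
    apply (D.T2 M).hom_ext
    · rw [(D.T2 M).pair_pr0, (D.T2 M).pair_pr0]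
    · rw [(D.T2 M).pair_pr1, (D.T2 M).pair_pr1, Category.comp_id]
  have hstep2 : ((D.T2 M).pair (b ≫ D.p.app M ≫ D.zero.app M) b hb ≫ H)
        ≫ D.l.app (D.T.obj M)
      = ((D.T2 M).pair (b ≫ D.p.app M ≫ D.zero.app M) b hb ≫ H)
        ≫ D.zero.app (D.T.obj (D.T.obj M)) := by
    rw [Category.assoc, hHl, ← Category.assoc, hstep1, Category.assoc, ← D.T.map_comp]
    simp only [Category.assoc]
    rw [← D.zero_nat_s19 ((D.T2 M).pair (D.p.app M ≫ D.zero.app M) (𝟙 _) hzeta ≫ H)]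
    try simp only [Category.assoc]
    try rw [reassoc_of% hbzeta]
    try simp only [Category.assoc]
  have hc1 : ((D.T2 M).pair (b ≫ D.p.app M ≫ D.zero.app M) b hb ≫ H)
        ≫ D.p.app (D.T.obj M)
      = (((D.T2 M).pair (b ≫ D.p.app M ≫ D.zero.app M) b hb ≫ H)
          ≫ D.p.app (D.T.obj M) ≫ D.zero.app (D.T.obj M)) ≫ D.p.app (D.T.obj M) := by
    simp [D.zero_p]
  rw [D.comp_l _ hc1, D.comp_zero_vmu _ hc1.symm] at hstep2
  have h5 := D.vmu_mono _ _ hstep2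
  have h6 := congrArg (fun t => t ≫ (D.T2 (D.T.obj M)).pr0) h5
  simp only [(D.T2 (D.T.obj M)).pair_pr0] at h6
  rw [h6, ← Category.assoc, hxi]

lemma TangentCat.H_hadd {M X : C} (H : (D.T2 M).P ⟶ D.T.obj (D.T.obj M))
    (hH2 : H ≫ D.p.app (D.T.obj M) = (D.T2 M).pr1)
    (hHl : H ≫ D.l.app (D.T.obj M)
      = (D.T2T M).pair ((D.T2 M).pr0 ≫ D.l.app M)
          ((D.T2 M).pr1 ≫ D.zero.app (D.T.obj M)) (D.Wcomp M) ≫ D.T.map H)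
    (x y b : X ⟶ D.T.obj M)
    (hxy : x ≫ D.p.app M = y ≫ D.p.app M) (hxb : x ≫ D.p.app M = b ≫ D.p.app M)
    (hyb : y ≫ D.p.app M = b ≫ D.p.app M)
    (hs : D.hadd x y ≫ D.p.app M = b ≫ D.p.app M) :
    (D.T2 M).pair (D.hadd x y) b hs ≫ H
      = D.hadd ((D.T2 M).pair x b hxb ≫ H) ((D.T2 M).pair y b hyb ≫ H) := by
  have hu0 : ((D.T2 M).pair x b hxb
        ≫ (D.T2T M).pair ((D.T2 M).pr0 ≫ D.l.app M)
            ((D.T2 M).pr1 ≫ D.zero.app (D.T.obj M)) (D.Wcomp M))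
        ≫ D.T.map (D.T2 M).pr0 = x ≫ D.l.app M := by
    rw [Category.assoc, (D.T2T M).pair_pr0, ← Category.assoc, (D.T2 M).pair_pr0]
  have hv0 : ((D.T2 M).pair y b hyb
        ≫ (D.T2T M).pair ((D.T2 M).pr0 ≫ D.l.app M)
            ((D.T2 M).pr1 ≫ D.zero.app (D.T.obj M)) (D.Wcomp M))
        ≫ D.T.map (D.T2 M).pr0 = y ≫ D.l.app M := by
    rw [Category.assoc, (D.T2T M).pair_pr0, ← Category.assoc, (D.T2 M).pair_pr0]
  have hu1 : ((D.T2 M).pair x b hxb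
        ≫ (D.T2T M).pair ((D.T2 M).pr0 ≫ D.l.app M)
            ((D.T2 M).pr1 ≫ D.zero.app (D.T.obj M)) (D.Wcomp M))
        ≫ D.T.map (D.T2 M).pr1 = b ≫ D.zero.app (D.T.obj M) := by
    rw [Category.assoc, (D.T2T M).pair_pr1, ← Category.assoc, (D.T2 M).pair_pr1]
  have hv1 : ((D.T2 M).pair y b hyb
        ≫ (D.T2T M).pair ((D.T2 M).pr0 ≫ D.l.app M)
            ((D.T2 M).pr1 ≫ D.zero.app (D.T.obj M)) (D.Wcomp M))
        ≫ D.T.map (D.T2 M).pr1 = b ≫ D.zero.app (D.T.obj M) := by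
    rw [Category.assoc, (D.T2T M).pair_pr1, ← Category.assoc, (D.T2 M).pair_pr1]
  have hcompat : ((D.T2 M).pair x b hxb
        ≫ (D.T2T M).pair ((D.T2 M).pr0 ≫ D.l.app M)
            ((D.T2 M).pr1 ≫ D.zero.app (D.T.obj M)) (D.Wcomp M))
        ≫ D.p.app ((D.T2 M).P)
      = ((D.T2 M).pair y b hyb
        ≫ (D.T2T M).pair ((D.T2 M).pr0 ≫ D.l.app M)
            ((D.T2 M).pr1 ≫ D.zero.app (D.T.obj M)) (D.Wcomp M))
        ≫ D.p.app ((D.T2 M).P) := by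
    apply (D.T2 M).hom_ext
    · simp only [Category.assoc]
      rw [← D.p_nat_s19 (D.T2 M).pr0, reassoc_of% hu0, reassoc_of% hv0, D.l_p_s19]
      slice_lhs 1 2 => rw [hxy]
      simp only [Category.assoc]
    · simp only [Category.assoc]
      rw [← D.p_nat_s19 (D.T2 M).pr1, reassoc_of% hu1, reassoc_of% hv1]
  have hc1 : (D.T2 M).pair (D.hadd x y) b hs
        ≫ (D.T2T M).pair ((D.T2 M).pr0 ≫ D.l.app M)
            ((D.T2 M).pr1 ≫ D.zero.app (D.T.obj M)) (D.Wcomp M)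
      = D.hadd ((D.T2 M).pair x b hxb
          ≫ (D.T2T M).pair ((D.T2 M).pr0 ≫ D.l.app M)
              ((D.T2 M).pr1 ≫ D.zero.app (D.T.obj M)) (D.Wcomp M))
          ((D.T2 M).pair y b hyb
          ≫ (D.T2T M).pair ((D.T2 M).pr0 ≫ D.l.app M)
              ((D.T2 M).pr1 ≫ D.zero.app (D.T.obj M)) (D.Wcomp M)) := by
    apply (D.T2T M).hom_ext
    · simp only [Category.assoc]
      rw [(D.T2T M).pair_pr0, reassoc_of% ((D.T2 M).pair_pr0 (D.hadd x y) b hs),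
        D.hadd_l x y hxy, D.hadd_Tmap (D.T2 M).pr0 _ _ hcompat, hu0, hv0]
    · simp only [Category.assoc]
      rw [(D.T2T M).pair_pr1, reassoc_of% ((D.T2 M).pair_pr1 (D.hadd x y) b hs),
        D.hadd_Tmap (D.T2 M).pr1 _ _ hcompat, hu1, hv1]
      exact (D.hadd_zz b).symm
  have hHp1 : ((D.T2 M).pair x b hxb ≫ H) ≫ D.p.app (D.T.obj M)
      = ((D.T2 M).pair y b hyb ≫ H) ≫ D.p.app (D.T.obj M) := by
    rw [Category.assoc, hH2, (D.T2 M).pair_pr1, Category.assoc, hH2, (D.T2 M).pair_pr1]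
  apply D.l_mono
  calc ((D.T2 M).pair (D.hadd x y) b hs ≫ H) ≫ D.l.app (D.T.obj M)
      = (D.T2 M).pair (D.hadd x y) b hs
          ≫ (D.T2T M).pair ((D.T2 M).pr0 ≫ D.l.app M)
              ((D.T2 M).pr1 ≫ D.zero.app (D.T.obj M)) (D.Wcomp M) ≫ D.T.map H := by
        rw [Category.assoc, hHl]
    _ = D.hadd ((D.T2 M).pair x b hxb
          ≫ (D.T2T M).pair ((D.T2 M).pr0 ≫ D.l.app M)
              ((D.T2 M).pr1 ≫ D.zero.app (D.T.obj M)) (D.Wcomp M))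
          ((D.T2 M).pair y b hyb
          ≫ (D.T2T M).pair ((D.T2 M).pr0 ≫ D.l.app M)
              ((D.T2 M).pr1 ≫ D.zero.app (D.T.obj M)) (D.Wcomp M)) ≫ D.T.map H := by
        rw [← Category.assoc, hc1]
    _ = D.hadd (((D.T2 M).pair x b hxb
          ≫ (D.T2T M).pair ((D.T2 M).pr0 ≫ D.l.app M)
              ((D.T2 M).pr1 ≫ D.zero.app (D.T.obj M)) (D.Wcomp M)) ≫ D.T.map H)
          (((D.T2 M).pair y b hyb
          ≫ (D.T2T M).pair ((D.T2 M).pr0 ≫ D.l.app M)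
              ((D.T2 M).pr1 ≫ D.zero.app (D.T.obj M)) (D.Wcomp M)) ≫ D.T.map H) :=
        D.hadd_Tmap H _ _ hcompat
    _ = D.hadd (((D.T2 M).pair x b hxb ≫ H) ≫ D.l.app (D.T.obj M))
          (((D.T2 M).pair y b hyb ≫ H) ≫ D.l.app (D.T.obj M)) := by
        rw [Category.assoc, ← hHl, Category.assoc, ← hHl, ← Category.assoc,
          ← Category.assoc]
    _ = D.hadd ((D.T2 M).pair x b hxb ≫ H) ((D.T2 M).pair y b hyb ≫ H)
          ≫ D.l.app (D.T.obj M) := (D.hadd_l _ _ hHp1).symm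

lemma TangentCat.H_neg (N : HasNegatives D) {M X : C}
    (H : (D.T2 M).P ⟶ D.T.obj (D.T.obj M))
    (hH2 : H ≫ D.p.app (D.T.obj M) = (D.T2 M).pr1)
    (hHl : H ≫ D.l.app (D.T.obj M)
      = (D.T2T M).pair ((D.T2 M).pr0 ≫ D.l.app M)
          ((D.T2 M).pr1 ≫ D.zero.app (D.T.obj M)) (D.Wcomp M) ≫ D.T.map H)
    (x b : X ⟶ D.T.obj M) (hxb : x ≫ D.p.app M = b ≫ D.p.app M)
    (hnb : (x ≫ N.neg M) ≫ D.p.app M = b ≫ D.p.app M) :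
    (D.T2 M).pair (x ≫ N.neg M) b hnb ≫ H
      = ((D.T2 M).pair x b hxb ≫ H) ≫ N.neg (D.T.obj M) := by
  have hxn : x ≫ D.p.app M = (x ≫ N.neg M) ≫ D.p.app M := by
    rw [Category.assoc, N.neg_p]
  have hp1 : ((D.T2 M).pair x b hxb ≫ H) ≫ D.p.app (D.T.obj M) = b := by
    rw [Category.assoc, hH2, (D.T2 M).pair_pr1]
  have hp2 : ((D.T2 M).pair (x ≫ N.neg M) b hnb ≫ H) ≫ D.p.app (D.T.obj M) = b := by
    rw [Category.assoc, hH2, (D.T2 M).pair_pr1]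
  refine D.neg_unique N ((D.T2 M).pair x b hxb ≫ H) _ (by rw [hp1, hp2]) ?_
  have hsum : D.hadd x (x ≫ N.neg M) ≫ D.p.app M = b ≫ D.p.app M := by
    rw [D.hadd_p _ _ hxn, hxb]
  calc D.hadd ((D.T2 M).pair x b hxb ≫ H) ((D.T2 M).pair (x ≫ N.neg M) b hnb ≫ H)
      = (D.T2 M).pair (D.hadd x (x ≫ N.neg M)) b hsum ≫ H :=
        (D.H_hadd H hH2 hHl x (x ≫ N.neg M) b hxn hxb hnb hsum).symm
    _ = (D.T2 M).pair (b ≫ D.p.app M ≫ D.zero.app M) b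
          (by simp [D.zero_p]) ≫ H := by
        rw [(D.T2 M).pair_congr_s19 (h' := by simp [D.zero_p])
          ((D.hadd_neg N x).trans (D.pz_congr hxb)) rfl hsum]
    _ = b ≫ D.zero.app (D.T.obj M) := D.H_zero H hH2 hHl b (by simp [D.zero_p])
    _ = ((D.T2 M).pair x b hxb ≫ H) ≫ D.p.app (D.T.obj M) ≫ D.zero.app (D.T.obj M) := by
        rw [← Category.assoc, hp1]

lemma TangentCat.mu_K (N : HasNegatives D) {M : C}
    (K : D.T.obj (D.T.obj M) ⟶ D.T.obj M)
    (H : (D.T2 M).P ⟶ D.T.obj (D.T.obj M))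
    (R : D.T.obj (D.T.obj M) ⟶ (D.T2 M).P)
    (hR0 : R ≫ (D.T2 M).pr0 = K) (hR1 : R ≫ (D.T2 M).pr1 = D.p.app (D.T.obj M))
    (hH2 : H ≫ D.p.app (D.T.obj M) = (D.T2 M).pr1)
    (hHl : H ≫ D.l.app (D.T.obj M)
      = (D.T2T M).pair ((D.T2 M).pr0 ≫ D.l.app M)
          ((D.T2 M).pr1 ≫ D.zero.app (D.T.obj M)) (D.Wcomp M) ≫ D.T.map H)
    (hdec : D.hadd (R ≫ D.vmu M) (D.hdesc (D.p.app M) (D.T2 M) ≫ H)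
      = 𝟙 (D.T.obj (D.T.obj M))) :
    D.vmu M ≫ K = (D.T2 M).pr0 := by
  have hUdef : D.hdesc (D.p.app M) (D.T2 M)
      = (D.T2 M).pair (D.T.map (D.p.app M)) (D.p.app (D.T.obj M))
          (by simpa using D.p.naturality (D.p.app M)) := rfl
  have h1 : (R ≫ D.vmu M) ≫ D.p.app (D.T.obj M) = D.p.app (D.T.obj M) := by
    rw [Category.assoc, D.vmu_p, hR1]
  have h2 : (D.hdesc (D.p.app M) (D.T2 M) ≫ H) ≫ D.p.app (D.T.obj M)
      = D.p.app (D.T.obj M) := by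
    rw [Category.assoc, hH2, hUdef, (D.T2 M).pair_pr1]
  have hc : (R ≫ D.vmu M) ≫ D.p.app (D.T.obj M)
      = (D.hdesc (D.p.app M) (D.T2 M) ≫ H) ≫ D.p.app (D.T.obj M) := h1.trans h2.symm
  have hstart : D.vmu M
      = D.hadd (D.vmu M ≫ R ≫ D.vmu M)
          (D.vmu M ≫ D.hdesc (D.p.app M) (D.T2 M) ≫ H) := by
    conv_lhs => rw [← Category.comp_id (D.vmu M), ← hdec]
    rw [D.comp_hadd (D.vmu M) _ _ hc]
  have hKc : (D.vmu M ≫ K) ≫ D.p.app M = (D.T2 M).pr1 ≫ D.p.app M := by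
    calc (D.vmu M ≫ K) ≫ D.p.app M
        = D.vmu M ≫ K ≫ D.p.app M := by rw [Category.assoc]
      _ = D.vmu M ≫ (R ≫ (D.T2 M).pr0) ≫ D.p.app M := by rw [hR0]
      _ = (D.vmu M ≫ R) ≫ (D.T2 M).pr0 ≫ D.p.app M := by simp only [Category.assoc]
      _ = (D.vmu M ≫ R) ≫ (D.T2 M).pr1 ≫ D.p.app M := by rw [(D.T2 M).comm]
      _ = D.vmu M ≫ (R ≫ (D.T2 M).pr1) ≫ D.p.app M := by simp only [Category.assoc]
      _ = (D.T2 M).pr1 ≫ D.p.app M := by rw [hR1, ← Category.assoc, D.vmu_p]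
  have hR' : D.vmu M ≫ R = (D.T2 M).pair (D.vmu M ≫ K) (D.T2 M).pr1 hKc := by
    apply (D.T2 M).hom_ext
    · rw [Category.assoc, hR0, (D.T2 M).pair_pr0]
    · rw [Category.assoc, hR1, D.vmu_p, (D.T2 M).pair_pr1]
  have hz2 : ((D.T2 M).pr1 ≫ D.p.app M ≫ D.zero.app M) ≫ D.p.app M
      = (D.T2 M).pr1 ≫ D.p.app M := by simp [D.zero_p]
  have hμU : D.vmu M ≫ D.hdesc (D.p.app M) (D.T2 M)
      = (D.T2 M).pair ((D.T2 M).pr1 ≫ D.p.app M ≫ D.zero.app M) (D.T2 M).pr1 hz2 := by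
    rw [hUdef, (D.T2 M).pair_comp]
    apply (D.T2 M).hom_ext
    · rw [(D.T2 M).pair_pr0, (D.T2 M).pair_pr0, D.vmu_Tp, ← Category.assoc,
        (D.T2 M).comm, Category.assoc]
    · rw [(D.T2 M).pair_pr1, (D.T2 M).pair_pr1, D.vmu_p]
  have hμUH : D.vmu M ≫ D.hdesc (D.p.app M) (D.T2 M) ≫ H
      = (D.T2 M).pr1 ≫ D.zero.app (D.T.obj M) := by
    rw [← Category.assoc, hμU]
    exact D.H_zero H hH2 hHl (D.T2 M).pr1 hz2
  have E1 : D.vmu M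
      = D.hadd ((D.T2 M).pair (D.vmu M ≫ K) (D.T2 M).pr1 hKc ≫ D.vmu M)
          ((D.T2 M).pr1 ≫ D.zero.app (D.T.obj M)) := by
    conv_lhs => rw [hstart]
    rw [hμUH, ← Category.assoc, hR']
  have E2 : D.vmu M = D.hadd (D.vmu M) ((D.T2 M).pr1 ≫ D.zero.app (D.T.obj M)) := by
    calc D.vmu M
        = D.hadd (D.vmu M)
            (D.vmu M ≫ D.p.app (D.T.obj M) ≫ D.zero.app (D.T.obj M)) :=
          (D.hadd_zero _).symm
      _ = D.hadd (D.vmu M) ((D.T2 M).pr1 ≫ D.zero.app (D.T.obj M)) := by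
          rw [← Category.assoc, D.vmu_p]
  have hxp : ((D.T2 M).pr1 ≫ D.zero.app (D.T.obj M)) ≫ D.p.app (D.T.obj M)
      = (D.T2 M).pr1 := by
    rw [Category.assoc, D.zero_p]; simp
  have hcancel := D.hadd_cancel N
    ((D.T2 M).pair (D.vmu M ≫ K) (D.T2 M).pr1 hKc ≫ D.vmu M) (D.vmu M)
    ((D.T2 M).pr1 ≫ D.zero.app (D.T.obj M))
    (by rw [Category.assoc, D.vmu_p, (D.T2 M).pair_pr1, hxp])
    (by rw [D.vmu_p, hxp])
    (E1.symm.trans E2)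
  have h8 := D.vmu_mono ((D.T2 M).pair (D.vmu M ≫ K) (D.T2 M).pr1 hKc) (𝟙 _)
    (by rw [hcancel, Category.id_comp])
  have h9 := congrArg (fun t => t ≫ (D.T2 M).pr0) h8
  simpa only [(D.T2 M).pair_pr0, Category.id_comp] using h9

end Stmt19Aux
/-- In a tangent category with negatives, if `(K,H)` is an
affine connection on `M`, then `F = RH − Uv : T²(M) → T²(M)` is an almost
complex structure: `FF = −1`, where `R = ⟨K,p⟩`, `U = ⟨T(p),p⟩` and
`v = ⟨π₀ℓ, π₁0⟩T(+)`. -/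
theorem stmt19 (D : TangentCat C) (N : HasNegatives D) {M : C}
    (K : D.T.obj (D.T.obj M) ⟶ D.T.obj M)
    (H : (D.T2 M).P ⟶ D.T.obj (D.T.obj M))
    (hconn : IsConnectionPair D (D.p.app M) (D.l.app M) (D.T2 M)
      (D.zero.app M) (D.vmu M) (D.T2 M) K H)
    (R : D.T.obj (D.T.obj M) ⟶ (D.T2 M).P)
    (hR0 : R ≫ (D.T2 M).pr0 = K) (hR1 : R ≫ (D.T2 M).pr1 = D.p.app (D.T.obj M)) :
    D.sub N (R ≫ H) (D.hdesc (D.p.app M) (D.T2 M) ≫ D.vmu M) ≫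
        D.sub N (R ≫ H) (D.hdesc (D.p.app M) (D.T2 M) ≫ D.vmu M)
      = N.neg (D.T.obj M) := by
  obtain ⟨⟨hlK, hKp, hKl, hKl2⟩, ⟨hH1, hH2, hH3, hH4⟩, hHK, R', hR0', hR1', hdec'⟩ := hconn
  have hRR : R' = R := (D.T2 M).hom_ext _ _ (by rw [hR0', hR0]) (by rw [hR1', hR1])
  rw [hRR] at hdec'
  have hHl := D.H_l H hH3
  have hμK := D.mu_K N K H R hR0 hR1 hH2 hHl hdec'
  have hUdef : D.hdesc (D.p.app M) (D.T2 M)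
      = (D.T2 M).pair (D.T.map (D.p.app M)) (D.p.app (D.T.obj M))
          (by simpa using D.p.naturality (D.p.app M)) := rfl
  have hTpp : D.T.map (D.p.app M) ≫ D.p.app M = D.p.app (D.T.obj M) ≫ D.p.app M := by
    simpa using D.p.naturality (D.p.app M)
  have hnegTp : N.neg (D.T.obj M) ≫ D.T.map (D.p.app M)
      = D.T.map (D.p.app M) ≫ N.neg M := D.neg_Tmap N (D.p.app M)
  simp only [TangentCat.sub]
  set F := D.hadd (R ≫ H)
    ((D.hdesc (D.p.app M) (D.T2 M) ≫ D.vmu M) ≫ N.neg (D.T.obj M)) with hF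
  have hRHp : (R ≫ H) ≫ D.p.app (D.T.obj M) = D.p.app (D.T.obj M) := by
    rw [Category.assoc, hH2, hR1]
  have hUμp : ((D.hdesc (D.p.app M) (D.T2 M) ≫ D.vmu M) ≫ N.neg (D.T.obj M))
      ≫ D.p.app (D.T.obj M) = D.p.app (D.T.obj M) := by
    rw [Category.assoc, N.neg_p, Category.assoc, D.vmu_p, hUdef, (D.T2 M).pair_pr1]
  have hcF : (R ≫ H) ≫ D.p.app (D.T.obj M)
      = ((D.hdesc (D.p.app M) (D.T2 M) ≫ D.vmu M) ≫ N.neg (D.T.obj M))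
          ≫ D.p.app (D.T.obj M) := hRHp.trans hUμp.symm
  have hFp : F ≫ D.p.app (D.T.obj M) = D.p.app (D.T.obj M) := by
    rw [hF, D.hadd_p _ _ hcF, hRHp]
  have e1 : (R ≫ H) ≫ D.T.map (D.p.app M) = K := by
    rw [Category.assoc, hH1, hR0]
  have e2 : ((D.hdesc (D.p.app M) (D.T2 M) ≫ D.vmu M) ≫ N.neg (D.T.obj M))
      ≫ D.T.map (D.p.app M) = K ≫ D.p.app M ≫ D.zero.app M := by
    simp only [Category.assoc]
    rw [hnegTp, reassoc_of% (D.vmu_Tp M), D.zero_neg N M, hUdef,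
      reassoc_of% ((D.T2 M).pair_pr0 (D.T.map (D.p.app M)) (D.p.app (D.T.obj M))
        (by simpa using D.p.naturality (D.p.app M)))]
    rw [← Category.assoc, ← Category.assoc, hTpp, hKp]
  have hFTp : F ≫ D.T.map (D.p.app M) = K := by
    rw [hF, D.hadd_Tmap (D.p.app M) _ _ hcF, e1, e2]
    exact D.hadd_zero K
  have hFU : F ≫ D.hdesc (D.p.app M) (D.T2 M) = R := by
    rw [hUdef, (D.T2 M).pair_comp]
    apply (D.T2 M).hom_ext
    · rw [(D.T2 M).pair_pr0, hFTp, hR0]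
    · rw [(D.T2 M).pair_pr1, hFp, hR1]
  have e3 : (R ≫ H) ≫ K = D.p.app (D.T.obj M) ≫ D.p.app M ≫ D.zero.app M := by
    rw [Category.assoc, hHK, reassoc_of% hR1]
  have e4 : ((D.hdesc (D.p.app M) (D.T2 M) ≫ D.vmu M) ≫ N.neg (D.T.obj M)) ≫ K
      = D.T.map (D.p.app M) ≫ N.neg M := by
    simp only [Category.assoc]
    rw [D.K_neg N K hKp hKl, reassoc_of% hμK, hUdef,
      reassoc_of% ((D.T2 M).pair_pr0 (D.T.map (D.p.app M)) (D.p.app (D.T.obj M))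
        (by simpa using D.p.naturality (D.p.app M)))]
  have hcz : (D.T.map (D.p.app M) ≫ N.neg M) ≫ D.p.app M ≫ D.zero.app M
      = D.p.app (D.T.obj M) ≫ D.p.app M ≫ D.zero.app M := by
    simp only [Category.assoc]
    rw [reassoc_of% (N.neg_p M)]
    rw [← Category.assoc, ← Category.assoc, hTpp]
  have hFK : F ≫ K = D.T.map (D.p.app M) ≫ N.neg M := by
    rw [hF, D.K_hadd K hKp hKl _ _ hcF, e3, e4]
    rw [D.hadd_comm _ _ (by simp [D.zero_p, N.neg_p, hTpp]), ← hcz]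
    exact D.hadd_zero _
  have hc2 : (D.T.map (D.p.app M) ≫ N.neg M) ≫ D.p.app M
      = D.p.app (D.T.obj M) ≫ D.p.app M := by
    rw [Category.assoc, N.neg_p, hTpp]
  have hFR : F ≫ R = (D.T2 M).pair (D.T.map (D.p.app M) ≫ N.neg M)
      (D.p.app (D.T.obj M)) hc2 := by
    apply (D.T2 M).hom_ext
    · rw [Category.assoc, hR0, hFK, (D.T2 M).pair_pr0]
    · rw [Category.assoc, hR1, hFp, (D.T2 M).pair_pr1]
  have hx1 : F ≫ R ≫ H = (D.hdesc (D.p.app M) (D.T2 M) ≫ H) ≫ N.neg (D.T.obj M) := by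
    rw [← Category.assoc, hFR,
      D.H_neg N H hH2 hHl (D.T.map (D.p.app M)) (D.p.app (D.T.obj M)) hTpp hc2,
      ← hUdef]
  have hx2 : F ≫ (D.hdesc (D.p.app M) (D.T2 M) ≫ D.vmu M) ≫ N.neg (D.T.obj M)
      = (R ≫ D.vmu M) ≫ N.neg (D.T.obj M) := by
    simp only [← Category.assoc]
    rw [hFU]
  have ha : (D.hdesc (D.p.app M) (D.T2 M) ≫ H) ≫ D.p.app (D.T.obj M)
      = D.p.app (D.T.obj M) := by
    rw [Category.assoc, hH2, hUdef, (D.T2 M).pair_pr1]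
  have hb : (R ≫ D.vmu M) ≫ D.p.app (D.T.obj M) = D.p.app (D.T.obj M) := by
    rw [Category.assoc, D.vmu_p, hR1]
  nth_rewrite 2 [hF]
  rw [D.comp_hadd F _ _ hcF, hx1, hx2, D.neg_hadd N _ _ (ha.trans hb.symm),
    D.hadd_comm _ _ (ha.trans hb.symm), hdec', Category.id_comp]
end
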